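/- arXiv:1605.02054 — 7 statements merged into one kernel-verified Lean document; each statement's English description precedes it below -/
import Mathlib

section
/- Let there be n bidders and m items, with real numbers v_{ij} ≥ 0 (values), b_i ≥ 0 (budgets), m_i ∈ ℝ (price multipliers), and w_{ij} ∈ ℝ (virtual values). Fix a 0/1 allocation x ∈ {0,1}^{n×m}. Then the maximum over all price vectors p ∈ ℝ^n satisfying 0 ≤ p_i ≤ min(b_i, Σ_j x_{ij} v_{ij}) for all i of the quantity Σ_i m_i p_i + Σ_{i,j} x_{ij} w_{ij} equals Σ_i max(m_i, 0) · min(b_i, Σ_j x_{ij} · min(v_{ij}, b_i)) + Σ_{i,j} x_{ij} w_{ij}. -/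
lemma goop_cap_eq {m : ℕ} (v : Fin m → ℝ) (b : ℝ) (x : Fin m → ℝ)
    (hv : ∀ j, 0 ≤ v j) (hb : 0 ≤ b) (hx : ∀ j, x j = 0 ∨ x j = 1) :
    min b (∑ j, x j * min (v j) b) = min b (∑ j, x j * v j) := by
  have hx0 : ∀ j, 0 ≤ x j := fun j => by rcases hx j with h | h <;> simp [h]
  have hterm : ∀ j, 0 ≤ x j * min (v j) b := fun j =>
    mul_nonneg (hx0 j) (le_min (hv j) hb)
  by_cases h : b ≤ ∑ j, x j * min (v j) b
  · have h2 : b ≤ ∑ j, x j * v j :=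
      h.trans (Finset.sum_le_sum fun j _ =>
        mul_le_mul_of_nonneg_left (min_le_left _ _) (hx0 j))
    rw [min_eq_left h, min_eq_left h2]
  · push_neg at h
    congr 1
    apply Finset.sum_congr rfl
    intro j _
    rcases hx j with h0 | h1
    · simp [h0]
    · have : x j * min (v j) b ≤ ∑ k, x k * min (v k) b :=
        Finset.single_le_sum (fun k _ => hterm k) (Finset.mem_univ j)
      rw [h1, one_mul, one_mul] at *
      have hlt : min (v j) b < b := lt_of_le_of_lt this h
      have : v j < b := by
        by_contra hge
        push_neg at hge
        simp [min_eq_right hge] at hlt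
      exact min_eq_left this.le

/-- For a fixed 0/1 allocation `x`, the maximum over feasible price vectors
`p` (with `0 ≤ p i ≤ min (b i) (∑ j, x i j * v i j)`) of
`∑ i, μ i * p i + ∑ i j, x i j * w i j` equals
`∑ i, max (μ i) 0 * min (b i) (∑ j, x i j * min (v i j) (b i)) + ∑ i j, x i j * w i j`. -/
theorem goop_price_maximum (n m : ℕ)
    (v : Fin n → Fin m → ℝ) (b : Fin n → ℝ) (μ : Fin n → ℝ) (w : Fin n → Fin m → ℝ)
    (hv : ∀ i j, 0 ≤ v i j) (hb : ∀ i, 0 ≤ b i)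
    (x : Fin n → Fin m → ℝ) (hx : ∀ i j, x i j = 0 ∨ x i j = 1) :
    IsGreatest
      {S : ℝ | ∃ p : Fin n → ℝ,
        (∀ i, 0 ≤ p i ∧ p i ≤ min (b i) (∑ j, x i j * v i j)) ∧
        S = (∑ i, μ i * p i) + ∑ i, ∑ j, x i j * w i j}
      ((∑ i, max (μ i) 0 * min (b i) (∑ j, x i j * min (v i j) (b i)))
        + ∑ i, ∑ j, x i j * w i j) := by
  have hcap : ∀ i, min (b i) (∑ j, x i j * min (v i j) (b i))
      = min (b i) (∑ j, x i j * v i j) := fun i =>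
    goop_cap_eq (v i) (b i) (x i) (hv i) (hb i) (hx i)
  set M : Fin n → ℝ := fun i => min (b i) (∑ j, x i j * v i j) with hM
  have hM0 : ∀ i, 0 ≤ M i := fun i =>
    le_min (hb i) (Finset.sum_nonneg fun j _ =>
      mul_nonneg (by rcases hx i j with h | h <;> simp [h]) (hv i j))
  constructor
  · refine ⟨fun i => if 0 ≤ μ i then M i else 0, fun i => ?_, ?_⟩
    · by_cases h : 0 ≤ μ i
      · simp only [if_pos h]; exact ⟨hM0 i, le_refl _⟩
      · simp only [if_neg h]; exact ⟨le_refl _, hM0 i⟩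
    · congr 1
      apply Finset.sum_congr rfl
      intro i _
      rw [hcap i]
      by_cases h : 0 ≤ μ i
      · simp [h, max_eq_left h, M]
      · push_neg at h
        simp [not_le.mpr h, max_eq_right h.le]
  · rintro S ⟨p, hp, rfl⟩
    apply add_le_add_left
    apply Finset.sum_le_sum
    intro i _
    rw [hcap i]
    rcases le_or_gt 0 (μ i) with h | h
    · rw [max_eq_left h]
      exact mul_le_mul_of_nonneg_left (hp i).2 h
    · rw [max_eq_right h.le, zero_mul]
      exact mul_nonpos_of_nonpos_of_nonneg h.le (hp i).1
end

section
/- Let b ≥ 0 be a real number, let S be a finite set, and let v : S → ℝ satisfy 0 ≤ v(j) ≤ b for all j ∈ S and Σ_{j∈S} v(j) ≤ 2b. Then there exist pairwise disjoint sets S₁, S₂, S₃ with S₁ ∪ S₂ ∪ S₃ = S such that Σ_{j∈S_k} v(j) ≤ b for each k ∈ {1,2,3}. -/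
lemma greedy_bin {ι : Type*} [DecidableEq ι] (b : ℝ) (hb : 0 ≤ b) (v : ι → ℝ)
    (S : Finset ι) :
    ∃ S₁ ⊆ S, (∑ j ∈ S₁, v j ≤ b) ∧
      (S₁ = S ∨ ∃ j ∈ S \ S₁, b < ∑ i ∈ S₁, v i + v j) := by
  classical
  induction S using Finset.induction_on with
  | empty => exact ⟨∅, le_refl _, by simpa, Or.inl rfl⟩
  | insert _ _ ha ih =>
    rename_i a s
    obtain ⟨S₁, hsub, hle, hcase⟩ := ih
    rcases hcase with rfl | ⟨j, hj, hjgt⟩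
    · by_cases h : ∑ i ∈ S₁, v i + v a ≤ b
      · refine ⟨insert a S₁, le_refl _, ?_, Or.inl rfl⟩
        rw [Finset.sum_insert ha]; linarith
      · refine ⟨S₁, Finset.subset_insert _ _, hle, Or.inr ⟨a, ?_, by linarith⟩⟩
        simp [ha]
    · refine ⟨S₁, hsub.trans (Finset.subset_insert _ _), hle, Or.inr ⟨j, ?_, hjgt⟩⟩
      rw [Finset.mem_sdiff] at hj ⊢
      exact ⟨Finset.mem_insert_of_mem hj.1, hj.2⟩

/-- A finite set of values, each in `[0, b]` and with total at most `2b`,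
can be partitioned into three groups each of total value at most `b`. -/
theorem three_bin_partition {ι : Type*} [DecidableEq ι] (b : ℝ) (hb : 0 ≤ b)
    (S : Finset ι) (v : ι → ℝ)
    (hv : ∀ j ∈ S, 0 ≤ v j ∧ v j ≤ b) (hsum : ∑ j ∈ S, v j ≤ 2 * b) :
    ∃ S₁ S₂ S₃ : Finset ι,
      Disjoint S₁ S₂ ∧ Disjoint S₁ S₃ ∧ Disjoint S₂ S₃ ∧
      S₁ ∪ S₂ ∪ S₃ = S ∧
      (∑ j ∈ S₁, v j ≤ b) ∧ (∑ j ∈ S₂, v j ≤ b) ∧ (∑ j ∈ S₃, v j ≤ b) := by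
  classical
  obtain ⟨S₁, hsub, hle, hcase⟩ := greedy_bin b hb v S
  rcases hcase with rfl | ⟨j, hj, hjgt⟩
  · exact ⟨S₁, ∅, ∅, by simp, by simp, by simp, by simp, hle, by simpa, by simpa⟩
  · rw [Finset.mem_sdiff] at hj
    obtain ⟨hjS, hjS₁⟩ := hj
    refine ⟨S₁, {j}, (S \ S₁) \ {j}, ?_, ?_, ?_, ?_, hle, ?_, ?_⟩
    · simp [Finset.disjoint_singleton_right, hjS₁]
    · exact Finset.disjoint_sdiff.mono_right Finset.sdiff_subset
    · simp [Finset.disjoint_singleton_left]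
    · ext i
      simp only [Finset.mem_union, Finset.mem_sdiff, Finset.mem_singleton]
      constructor
      · rintro ((h | rfl) | ⟨⟨h, _⟩, _⟩)
        · exact hsub h
        · exact hjS
        · exact h
      · intro h
        by_cases h1 : i ∈ S₁
        · tauto
        by_cases h2 : i = j <;> tauto
    · simpa using (hv j hjS).2
    · have hsplit : ∑ i ∈ S, v i = ∑ i ∈ S₁, v i + ∑ i ∈ S \ S₁, v i := by
        rw [← Finset.sum_sdiff hsub]; ring
      have hj' : j ∈ S \ S₁ := Finset.mem_sdiff.mpr ⟨hjS, hjS₁⟩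
      have hsplit2 : ∑ i ∈ S \ S₁, v i = v j + ∑ i ∈ (S \ S₁) \ {j}, v i := by
        rw [← Finset.sum_sdiff (Finset.singleton_subset_iff.mpr hj')]
        simp [add_comm]
      linarith
end

section
/- Let b ≥ 0 be a real number, let S be a finite set, let v : S → ℝ satisfy 0 ≤ v(j) ≤ b for all j ∈ S and Σ_{j∈S} v(j) ≤ 2b, and let c : S → ℝ be an arbitrary (possibly negative-valued) cost function. Then there exists a subset T ⊆ S with Σ_{j∈T} v(j) ≤ b and Σ_{j∈T} c(j) ≥ (Σ_{j∈S} c(j)) / 3. -/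
/-- Given values in `[0, b]` of total at most `2b` and arbitrary costs `c`,
there is a budget-feasible subset keeping at least a third of the total cost. -/
theorem budget_feasible_third_selection {ι : Type*} [DecidableEq ι] (b : ℝ) (hb : 0 ≤ b)
    (S : Finset ι) (v : ι → ℝ) (c : ι → ℝ)
    (hv : ∀ j ∈ S, 0 ≤ v j ∧ v j ≤ b) (hsum : ∑ j ∈ S, v j ≤ 2 * b) :
    ∃ T ⊆ S, (∑ j ∈ T, v j ≤ b) ∧ (∑ j ∈ T, c j ≥ (∑ j ∈ S, c j) / 3) := by
  by_cases hS : ∑ j ∈ S, v j ≤ b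
  · by_cases hc : 0 ≤ ∑ j ∈ S, c j
    · exact ⟨S, le_refl _, hS, by linarith⟩
    · refine ⟨∅, Finset.empty_subset _, by simpa using hb, by simp; linarith⟩
  · -- pick a subset A ⊆ S with sum ≤ b of maximal cardinality
    obtain ⟨A, hA, hmax⟩ := Finset.exists_max_image
      (S.powerset.filter fun A => ∑ j ∈ A, v j ≤ b) Finset.card
      ⟨∅, by simp [hb]⟩
    rw [Finset.mem_filter, Finset.mem_powerset] at hA
    obtain ⟨hAS, hAb⟩ := hA
    have hAne : A ≠ S := by rintro rfl; exact hS hAb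
    have hne : (S \ A).Nonempty := by
      rw [Finset.sdiff_nonempty]
      intro h
      exact hAne (Finset.Subset.antisymm hAS h)
    obtain ⟨x, hx⟩ := hne
    rw [Finset.mem_sdiff] at hx
    obtain ⟨hxS, hxA⟩ := hx
    have hins : insert x A ⊆ S := Finset.insert_subset hxS hAS
    have hsumins : ∑ j ∈ insert x A, v j = v x + ∑ j ∈ A, v j :=
      Finset.sum_insert hxA
    have hkey : b < v x + ∑ j ∈ A, v j := by
      by_contra h
      push_neg at h
      have hmem : insert x A ∈ S.powerset.filter fun A => ∑ j ∈ A, v j ≤ b := by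
        rw [Finset.mem_filter, Finset.mem_powerset]
        exact ⟨hins, by rw [hsumins]; exact h⟩
      have := hmax _ hmem
      rw [Finset.card_insert_of_notMem hxA] at this
      omega
    set C := S \ insert x A with hC
    have hCS : C ⊆ S := Finset.sdiff_subset
    have hCv : ∑ j ∈ C, v j + ∑ j ∈ insert x A, v j = ∑ j ∈ S, v j :=
      Finset.sum_sdiff hins
    have hCb : ∑ j ∈ C, v j ≤ b := by rw [hsumins] at hCv; linarith
    have hCc : ∑ j ∈ C, c j + ∑ j ∈ insert x A, c j = ∑ j ∈ S, c j :=
      Finset.sum_sdiff hins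
    rw [Finset.sum_insert hxA] at hCc
    have htri : (∑ j ∈ A, c j ≥ (∑ j ∈ S, c j) / 3) ∨ (c x ≥ (∑ j ∈ S, c j) / 3)
        ∨ (∑ j ∈ C, c j ≥ (∑ j ∈ S, c j) / 3) := by
      by_contra h
      push_neg at h
      obtain ⟨h1, h2, h3⟩ := h
      linarith
    rcases htri with h | h | h
    · exact ⟨A, hAS, hAb, h⟩
    · refine ⟨{x}, Finset.singleton_subset_iff.mpr hxS, ?_, by simpa using h⟩
      simpa using (hv x hxS).2
    · exact ⟨C, hCS, hCb, h⟩
end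

section
/- Let there be n bidders and m items with real numbers b_i ≥ 0, v_{ij} with 0 ≤ v_{ij} ≤ b_i, m_i ≥ 0, and w_{ij} ∈ ℝ. Suppose x̄, x̂ ∈ {0,1}^{n×m} satisfy Σ_i (x̄_{ij} + x̂_{ij}) ≤ 1 for all items j, and Σ_j x̄_{ij} v_{ij} ≤ 2 b_i for all bidders i, and let C = Σ_{i,j} m_i x̄_{ij} v_{ij} + Σ_{i,j} w_{ij} (x̄_{ij} + x̂_{ij}). Then there exist ȳ, ŷ ∈ {0,1}^{n×m} such that (1) Σ_i (ȳ_{ij} + ŷ_{ij}) ≤ 1 for all j; (2) Σ_j ȳ_{ij} v_{ij} ≤ b_i for all i; and (3) Σ_{i,j} m_i ȳ_{ij} v_{ij} + Σ_{i,j} w_{ij} (ȳ_{ij} + ŷ_{ij}) ≥ C/3. -/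
open Finset

lemma split3 {m : ℕ} (b : ℝ) (hb : 0 ≤ b) (f : Fin m → ℝ) (S : Finset (Fin m))
    (hfb : ∀ j ∈ S, f j ≤ b)
    (hS : ∑ j ∈ S, f j ≤ 2 * b) :
    ∃ A B : Finset (Fin m), A ⊆ S ∧ B ⊆ S \ A ∧
      ∑ j ∈ A, f j ≤ b ∧ ∑ j ∈ B, f j ≤ b ∧ ∑ j ∈ (S \ A) \ B, f j ≤ b := by
  classical
  set T : Set (Finset (Fin m)) := {A | A ⊆ S ∧ ∑ j ∈ A, f j ≤ b} with hT
  have hfin : T.Finite := Set.toFinite T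
  have hne : T.Nonempty := ⟨∅, by simp [hT, hb]⟩
  obtain ⟨A, hAT, hmax⟩ := Set.Finite.exists_maximalFor Finset.card T hfin hne
  obtain ⟨hAS, hAb⟩ := hAT
  by_cases hSA : S \ A = ∅
  · refine ⟨A, ∅, hAS, by simp, hAb, by simpa using hb, ?_⟩
    simpa [hSA] using hb
  · obtain ⟨j0, hj0⟩ := Finset.nonempty_iff_ne_empty.mpr hSA
    have hj0S : j0 ∈ S := (Finset.mem_sdiff.mp hj0).1
    have hj0A : j0 ∉ A := (Finset.mem_sdiff.mp hj0).2
    have hins : ¬ (∑ j ∈ insert j0 A, f j ≤ b) := by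
      intro hle
      have hmem : insert j0 A ∈ T := ⟨Finset.insert_subset hj0S hAS, hle⟩
      have := hmax hmem (Finset.card_le_card (Finset.subset_insert _ _))
      simp [Finset.card_insert_of_notMem hj0A] at this
    have hgt : b < f j0 + ∑ j ∈ A, f j := by
      rw [Finset.sum_insert hj0A] at hins; linarith [not_le.mp hins]
    have h1 : ∑ j ∈ (S \ A).erase j0, f j + f j0 = ∑ j ∈ S \ A, f j :=
      Finset.sum_erase_add _ _ hj0
    have h2 : ∑ j ∈ S \ A, f j + ∑ j ∈ A, f j = ∑ j ∈ S, f j := Finset.sum_sdiff hAS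
    refine ⟨A, {j0}, hAS, by simpa using hj0, hAb, by simpa using hfb j0 hj0S, ?_⟩
    rw [show (S \ A) \ ({j0} : Finset (Fin m)) = (S \ A).erase j0 from (Finset.erase_eq _ _).symm]
    linarith

/-- An integral allocation overshooting each budget by at most a factor of 2
can be converted into a budget-feasible integral allocation losing at most a factor of 3
in the mixed-sign objective. -/
theorem budget_rounding_factor_three (n m : ℕ)
    (b : Fin n → ℝ) (v : Fin n → Fin m → ℝ) (μ : Fin n → ℝ) (w : Fin n → Fin m → ℝ)
    (hb : ∀ i, 0 ≤ b i) (hv : ∀ i j, 0 ≤ v i j ∧ v i j ≤ b i) (hμ : ∀ i, 0 ≤ μ i)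
    (xb xh : Fin n → Fin m → ℝ)
    (hxb : ∀ i j, xb i j = 0 ∨ xb i j = 1) (hxh : ∀ i j, xh i j = 0 ∨ xh i j = 1)
    (hfeas : ∀ j, ∑ i, (xb i j + xh i j) ≤ 1)
    (hbud : ∀ i, ∑ j, xb i j * v i j ≤ 2 * b i)
    (C : ℝ)
    (hC : C = (∑ i, ∑ j, μ i * xb i j * v i j) + ∑ i, ∑ j, w i j * (xb i j + xh i j)) :
    ∃ yb yh : Fin n → Fin m → ℝ,
      (∀ i j, yb i j = 0 ∨ yb i j = 1) ∧ (∀ i j, yh i j = 0 ∨ yh i j = 1) ∧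
      (∀ j, ∑ i, (yb i j + yh i j) ≤ 1) ∧
      (∀ i, ∑ j, yb i j * v i j ≤ b i) ∧
      (∑ i, ∑ j, μ i * yb i j * v i j) + (∑ i, ∑ j, w i j * (yb i j + yh i j)) ≥ C / 3 := by
  classical
  set g : Fin n → Fin m → ℝ := fun i j => μ i * v i j + w i j with hgdef
  set S : Fin n → Finset (Fin m) :=
    (fun i => Finset.univ.filter (fun j => xb i j = 1 ∧ 0 ≤ g i j)) with hSdef
  set Txb : Fin n → Finset (Fin m) :=
    (fun i => Finset.univ.filter (fun j => xb i j = 1)) with hTdef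
  have hSsub : ∀ i, S i ⊆ Txb i := by
    intro i j hj
    simp only [hSdef, hTdef, Finset.mem_filter] at *
    exact ⟨hj.1, hj.2.1⟩
  set yh : Fin n → Fin m → ℝ :=
    (fun i j => if xh i j = 1 ∧ 0 ≤ w i j then 1 else 0) with hyhdef
  set W : ℝ := ∑ i, ∑ j, w i j * yh i j with hWdef
  have hTsum : ∀ i, ∑ j ∈ Txb i, v i j = ∑ j, xb i j * v i j := by
    intro i
    rw [hTdef, Finset.sum_filter]
    refine Finset.sum_congr rfl (fun j _ => ?_)
    rcases hxb i j with h | h <;> simp [h]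
  have hSvsum : ∀ i, ∑ j ∈ S i, v i j ≤ 2 * b i := by
    intro i
    calc ∑ j ∈ S i, v i j
        ≤ ∑ j ∈ Txb i, v i j :=
          Finset.sum_le_sum_of_subset_of_nonneg (hSsub i) (fun j _ _ => (hv i j).1)
      _ = ∑ j, xb i j * v i j := hTsum i
      _ ≤ 2 * b i := hbud i
  have hsplit : ∀ i, ∃ A B : Finset (Fin m), A ⊆ S i ∧ B ⊆ S i \ A ∧
      ∑ j ∈ A, v i j ≤ b i ∧ ∑ j ∈ B, v i j ≤ b i ∧ ∑ j ∈ (S i \ A) \ B, v i j ≤ b i :=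
    fun i => split3 (b i) (hb i) (v i) (S i) (fun j _ => (hv i j).2) (hSvsum i)
  choose A B hA hB hAb hBb hCb using hsplit
  -- generic candidate construction
  have key : ∀ P : Fin n → Finset (Fin m), (∀ i, P i ⊆ S i) → (∀ i, ∑ j ∈ P i, v i j ≤ b i) →
      ((∑ i, ∑ j ∈ P i, g i j) + W ≥ C / 3) →
      ∃ yb yh' : Fin n → Fin m → ℝ,
        (∀ i j, yb i j = 0 ∨ yb i j = 1) ∧ (∀ i j, yh' i j = 0 ∨ yh' i j = 1) ∧
        (∀ j, ∑ i, (yb i j + yh' i j) ≤ 1) ∧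
        (∀ i, ∑ j, yb i j * v i j ≤ b i) ∧
        (∑ i, ∑ j, μ i * yb i j * v i j) + (∑ i, ∑ j, w i j * (yb i j + yh' i j)) ≥ C / 3 := by
    intro P hPS hPb hobj
    set yb : Fin n → Fin m → ℝ := (fun i j => if j ∈ P i then 1 else 0) with hybdef
    have hyb01 : ∀ i j, yb i j = 0 ∨ yb i j = 1 := by
      intro i j; rw [hybdef]; dsimp only; split <;> simp
    have hyh01 : ∀ i j, yh i j = 0 ∨ yh i j = 1 := by
      intro i j; rw [hyhdef]; dsimp only; split <;> simp
    have hyble : ∀ i j, yb i j ≤ xb i j := by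
      intro i j
      rw [hybdef]; dsimp only
      split
      · rename_i hmem
        have := hPS i hmem
        rw [hSdef] at this
        simp only [Finset.mem_filter] at this
        rw [this.2.1]
      · rcases hxb i j with h | h <;> simp [h]
    have hyhle : ∀ i j, yh i j ≤ xh i j := by
      intro i j
      rw [hyhdef]; dsimp only
      split
      · rename_i hmem; rw [hmem.1]
      · rcases hxh i j with h | h <;> simp [h]
    have hybsum : ∀ (f : Fin n → Fin m → ℝ) i,
        ∑ j, f i j * yb i j = ∑ j ∈ P i, f i j := by
      intro f i
      rw [hybdef]; dsimp only
      rw [show (∑ j, f i j * (if j ∈ P i then (1:ℝ) else 0))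
          = ∑ j, (if j ∈ P i then f i j else 0) from
        Finset.sum_congr rfl (fun j _ => by split <;> simp)]
      rw [Finset.sum_ite_mem, Finset.univ_inter]
    refine ⟨yb, yh, hyb01, hyh01, ?_, ?_, ?_⟩
    · intro j
      calc ∑ i, (yb i j + yh i j) ≤ ∑ i, (xb i j + xh i j) :=
            Finset.sum_le_sum (fun i _ => add_le_add (hyble i j) (hyhle i j))
        _ ≤ 1 := hfeas j
    · intro i
      have : ∑ j, yb i j * v i j = ∑ j ∈ P i, v i j := by
        rw [Finset.sum_congr rfl (fun j (_ : j ∈ Finset.univ) => mul_comm (yb i j) (v i j))]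
        exact hybsum v i
      rw [this]; exact hPb i
    · have h1 : ∑ i, ∑ j, μ i * yb i j * v i j = ∑ i, ∑ j ∈ P i, μ i * v i j := by
        refine Finset.sum_congr rfl (fun i _ => ?_)
        rw [Finset.sum_congr rfl (fun j (_ : j ∈ Finset.univ) =>
          show μ i * yb i j * v i j = (μ i * v i j) * yb i j by ring)]
        exact hybsum (fun i j => μ i * v i j) i
      have h2 : ∑ i, ∑ j, w i j * (yb i j + yh i j)
          = (∑ i, ∑ j ∈ P i, w i j) + W := by
        have hsplit2 : ∀ i, ∑ j, w i j * (yb i j + yh i j)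
            = ∑ j, w i j * yb i j + ∑ j, w i j * yh i j := by
          intro i
          rw [← Finset.sum_add_distrib]
          exact Finset.sum_congr rfl (fun j _ => mul_add _ _ _)
        rw [Finset.sum_congr rfl (fun i (_ : i ∈ Finset.univ) => hsplit2 i),
          Finset.sum_add_distrib, hWdef]
        congr 1
        exact Finset.sum_congr rfl (fun i _ => hybsum w i)
      have h3 : ∑ i, ∑ j ∈ P i, g i j
          = ∑ i, ∑ j ∈ P i, μ i * v i j + ∑ i, ∑ j ∈ P i, w i j := by
        rw [← Finset.sum_add_distrib]
        refine Finset.sum_congr rfl (fun i _ => ?_)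
        rw [← Finset.sum_add_distrib]
      rw [h1, h2]
      linarith [hobj, h3]
  -- the three candidate part systems
  have hP2S : ∀ i, B i ⊆ S i := fun i => (hB i).trans (Finset.sdiff_subset)
  have hP3S : ∀ i, (S i \ A i) \ B i ⊆ S i :=
    fun i => (Finset.sdiff_subset).trans (Finset.sdiff_subset)
  have hpartsum : ∀ i, ∑ j ∈ A i, g i j + ∑ j ∈ B i, g i j + ∑ j ∈ (S i \ A i) \ B i, g i j
      = ∑ j ∈ S i, g i j := by
    intro i
    have e1 : ∑ j ∈ (S i \ A i) \ B i, g i j + ∑ j ∈ B i, g i j = ∑ j ∈ S i \ A i, g i j :=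
      Finset.sum_sdiff (hB i)
    have e2 : ∑ j ∈ S i \ A i, g i j + ∑ j ∈ A i, g i j = ∑ j ∈ S i, g i j :=
      Finset.sum_sdiff (hA i)
    linarith
  -- lower bound: ∑_{S i} g dominates the xb-part of C
  have hSg : ∀ i, ∑ j, μ i * xb i j * v i j + ∑ j, w i j * xb i j ≤ ∑ j ∈ S i, g i j := by
    intro i
    have e0 : ∑ j, μ i * xb i j * v i j + ∑ j, w i j * xb i j = ∑ j ∈ Txb i, g i j := by
      rw [← Finset.sum_add_distrib, hTdef, Finset.sum_filter]
      refine Finset.sum_congr rfl (fun j _ => ?_)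
      rcases hxb i j with h | h <;> simp [h, hgdef]
    rw [e0, ← Finset.sum_sdiff (hSsub i)]
    have hnp : ∑ j ∈ Txb i \ S i, g i j ≤ 0 := by
      refine Finset.sum_nonpos (fun j hj => ?_)
      rw [hTdef, hSdef] at hj
      simp only [Finset.mem_sdiff, Finset.mem_filter, Finset.mem_univ, true_and] at hj
      by_contra hpos
      exact hj.2 ⟨hj.1, le_of_not_gt (fun hlt => hpos (le_of_lt hlt))⟩
    linarith
  -- lower bound: W dominates the xh-part of C
  have hWge : ∀ i, ∑ j, w i j * xh i j ≤ ∑ j, w i j * yh i j := by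
    intro i
    refine Finset.sum_le_sum (fun j _ => ?_)
    rcases hxh i j with h | h
    · have hy : yh i j = 0 := by
        rw [hyhdef]; dsimp only; rw [if_neg]
        intro hc; rw [h] at hc; exact absurd hc.1 (by norm_num)
      rw [h, hy]
    · rcases le_or_gt 0 (w i j) with hw | hw
      · have hy : yh i j = 1 := by
          rw [hyhdef]; dsimp only; rw [if_pos ⟨h, hw⟩]
        rw [h, hy]
      · have hy : yh i j = 0 := by
          rw [hyhdef]; dsimp only; rw [if_neg]
          intro hc; linarith [hc.2]
        rw [h, hy]; linarith
  have hW0 : 0 ≤ W := by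
    rw [hWdef]
    refine Finset.sum_nonneg (fun i _ => Finset.sum_nonneg (fun j _ => ?_))
    rw [hyhdef]; dsimp only
    split <;> rename_i hc
    · simpa using hc.2
    · simp
  -- main counting inequality
  have hcount : ((∑ i, ∑ j ∈ A i, g i j) + W) + ((∑ i, ∑ j ∈ B i, g i j) + W)
      + ((∑ i, ∑ j ∈ (S i \ A i) \ B i, g i j) + W) ≥ C := by
    have e1 : (∑ i, ∑ j ∈ A i, g i j) + (∑ i, ∑ j ∈ B i, g i j)
        + (∑ i, ∑ j ∈ (S i \ A i) \ B i, g i j) = ∑ i, ∑ j ∈ S i, g i j := by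
      rw [← Finset.sum_add_distrib, ← Finset.sum_add_distrib]
      exact Finset.sum_congr rfl (fun i _ => hpartsum i)
    have e2 : ∑ i, ∑ j, μ i * xb i j * v i j + ∑ i, ∑ j, w i j * xb i j
        ≤ ∑ i, ∑ j ∈ S i, g i j := by
      rw [← Finset.sum_add_distrib]
      exact Finset.sum_le_sum (fun i _ => hSg i)
    have e3 : ∑ i, ∑ j, w i j * xh i j ≤ W := by
      rw [hWdef]; exact Finset.sum_le_sum (fun i _ => hWge i)
    have e5 : ∑ i, ∑ j, w i j * (xb i j + xh i j)
        = ∑ i, ∑ j, w i j * xb i j + ∑ i, ∑ j, w i j * xh i j := by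
      rw [← Finset.sum_add_distrib]
      refine Finset.sum_congr rfl (fun i _ => ?_)
      rw [← Finset.sum_add_distrib]
      exact Finset.sum_congr rfl (fun j _ => mul_add _ _ _)
    rw [hC, e5]
    linarith
  have hbest : ((∑ i, ∑ j ∈ A i, g i j) + W ≥ C / 3) ∨ ((∑ i, ∑ j ∈ B i, g i j) + W ≥ C / 3)
      ∨ ((∑ i, ∑ j ∈ (S i \ A i) \ B i, g i j) + W ≥ C / 3) := by
    by_contra hcon
    push_neg at hcon
    obtain ⟨c1, c2, c3⟩ := hcon
    linarith
  rcases hbest with h | h | h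
  · exact key A hA hAb h
  · exact key B hP2S hBb h
  · exact key (fun i => (S i \ A i) \ B i) hP3S hCb h
end

section
/- Let there be n bidders and m items with real numbers b_i ≥ 0, v_{ij} with 0 ≤ v_{ij} ≤ b_i, m_i ≥ 0, and w_{ij} ∈ ℝ. For any x ∈ {0,1}^{n×m} with Σ_i x_{ij} ≤ 1 for all items j, there exist fractional vectors x̄, x̂ ∈ [0,1]^{n×m} such that Σ_i (x̄_{ij} + x̂_{ij}) ≤ 1 for all j, Σ_j x̄_{ij} v_{ij} ≤ b_i for all i, and Σ_{i,j} m_i x̄_{ij} v_{ij} + Σ_{i,j} w_{ij} (x̄_{ij} + x̂_{ij}) ≥ Σ_i m_i · min(b_i, Σ_j x_{ij} v_{ij}) + Σ_{i,j} x_{ij} w_{ij}. In particular, the optimal value of the LP relaxation is at least the optimal value of Budgeted-Additive Virtual Welfare Maximization. -/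
/-- Every integral BAVWM allocation induces a feasible fractional LP
solution of at least the same objective value; hence the LP relaxation upper bounds
the BAVWM optimum. -/
theorem lp_relaxation_dominates_integral (n m : ℕ)
    (b : Fin n → ℝ) (v : Fin n → Fin m → ℝ) (μ : Fin n → ℝ) (w : Fin n → Fin m → ℝ)
    (hb : ∀ i, 0 ≤ b i) (hv : ∀ i j, 0 ≤ v i j ∧ v i j ≤ b i) (hμ : ∀ i, 0 ≤ μ i)
    (x : Fin n → Fin m → ℝ) (hx : ∀ i j, x i j = 0 ∨ x i j = 1)
    (hfeas : ∀ j, ∑ i, x i j ≤ 1) :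
    ∃ xb xh : Fin n → Fin m → ℝ,
      (∀ i j, 0 ≤ xb i j ∧ xb i j ≤ 1) ∧ (∀ i j, 0 ≤ xh i j ∧ xh i j ≤ 1) ∧
      (∀ j, ∑ i, (xb i j + xh i j) ≤ 1) ∧
      (∀ i, ∑ j, xb i j * v i j ≤ b i) ∧
      (∑ i, ∑ j, μ i * xb i j * v i j) + (∑ i, ∑ j, w i j * (xb i j + xh i j)) ≥
        (∑ i, μ i * min (b i) (∑ j, x i j * v i j)) + ∑ i, ∑ j, x i j * w i j := by
  set S : Fin n → ℝ := fun i => ∑ j, x i j * v i j with hS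
  have hx01 : ∀ i j, 0 ≤ x i j ∧ x i j ≤ 1 := by
    intro i j; rcases hx i j with h | h <;> simp [h]
  have hS0 : ∀ i, 0 ≤ S i := by
    intro i
    exact Finset.sum_nonneg fun j _ => mul_nonneg (hx01 i j).1 (hv i j).1
  set t : Fin n → ℝ := fun i => if S i ≤ b i then 1 else b i / S i with ht
  have ht01 : ∀ i, 0 ≤ t i ∧ t i ≤ 1 := by
    intro i
    simp only [ht]
    split_ifs with h
    · norm_num
    · push_neg at h
      have hSpos : 0 < S i := lt_of_le_of_lt (hb i) h
      constructor
      · exact div_nonneg (hb i) hSpos.le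
      · rw [div_le_one hSpos]; exact h.le
  have htS : ∀ i, t i * S i = min (b i) (S i) := by
    intro i
    simp only [ht]
    split_ifs with h
    · rw [min_eq_right h]; ring
    · push_neg at h
      have hSpos : 0 < S i := lt_of_le_of_lt (hb i) h
      rw [min_eq_left h.le, div_mul_cancel₀ _ hSpos.ne']
  refine ⟨fun i j => t i * x i j, fun i j => (1 - t i) * x i j, ?_, ?_, ?_, ?_, ?_⟩
  · intro i j
    constructor
    · exact mul_nonneg (ht01 i).1 (hx01 i j).1
    · exact mul_le_one₀ (ht01 i).2 (hx01 i j).1 (hx01 i j).2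
  · intro i j
    constructor
    · exact mul_nonneg (by linarith [(ht01 i).2]) (hx01 i j).1
    · exact mul_le_one₀ (by linarith [(ht01 i).1]) (hx01 i j).1 (hx01 i j).2
  · intro j
    calc ∑ i, (t i * x i j + (1 - t i) * x i j) = ∑ i, x i j := by
          apply Finset.sum_congr rfl; intro i _; ring
      _ ≤ 1 := hfeas j
  · intro i
    have : ∑ j, t i * x i j * v i j = t i * S i := by
      rw [hS, Finset.mul_sum]
      apply Finset.sum_congr rfl; intro j _; ring
    rw [this, htS i]
    exact min_le_left _ _
  · have h1 : ∑ i, ∑ j, μ i * (t i * x i j) * v i j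
        = ∑ i, μ i * min (b i) (S i) := by
      apply Finset.sum_congr rfl; intro i _
      rw [← htS i, hS, Finset.mul_sum, Finset.mul_sum]
      apply Finset.sum_congr rfl; intro j _; ring
    have h2 : ∑ i, ∑ j, w i j * (t i * x i j + (1 - t i) * x i j)
        = ∑ i, ∑ j, x i j * w i j := by
      apply Finset.sum_congr rfl; intro i _
      apply Finset.sum_congr rfl; intro j _; ring
    rw [h1, h2]
end

section
/- Let there be n bidders and m items with real numbers b_i ≥ 0, v_{ij} with 0 ≤ v_{ij} ≤ b_i, m_i ≥ 0, and w_{ij} ∈ ℝ. Suppose x̄, x̂ ∈ [0,1]^{n×m} satisfy Σ_i (x̄_{ij} + x̂_{ij}) ≤ 1 for all items j and Σ_j x̄_{ij} v_{ij} ≤ b_i for all bidders i. Then there exist integral ȳ, ŷ ∈ {0,1}^{n×m} such that (1) Σ_i (ȳ_{ij} + ŷ_{ij}) ≤ 1 for all j; (2) Σ_j ȳ_{ij} v_{ij} ≤ 2 b_i for all i; and (3) Σ_{i,j} m_i ȳ_{ij} v_{ij} + Σ_{i,j} w_{ij} (ȳ_{ij} + ŷ_{ij}) ≥ Σ_{i,j}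 m_i x̄_{ij} v_{ij} + Σ_{i,j} w_{ij} (x̄_{ij} + x̂_{ij}). -/
open Finset

/-- Length of `[x,y] ∩ [k,K]` is additive in the splitting point. -/
lemma interval_add (K k a b c : ℝ) (hab : a ≤ b) (hbc : b ≤ c) (hkK : k ≤ K) :
    max 0 (min c K - max a k) = max 0 (min b K - max a k) + max 0 (min c K - max b k) := by
  rcases le_total b k with h1 | h1
  · have e1 : max a k = k := max_eq_right (le_trans hab h1)
    have e2 : max b k = k := max_eq_right h1
    have e3 : max 0 (min b K - max a k) = 0 :=
      max_eq_left (by have := min_le_left b K; linarith)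
    rw [e2, e3, e1, zero_add]
  · rcases le_total b K with h2 | h2
    · have e1 : max b k = b := max_eq_left h1
      have e2 : min b K = b := min_eq_left h2
      have h3 : max a k ≤ b := max_le hab h1
      have h4 : b ≤ min c K := le_min hbc h2
      have e3 : max 0 (min c K - max a k) = min c K - max a k :=
        max_eq_right (by linarith)
      have e4 : max 0 (min b K - max a k) = b - max a k := by
        rw [e2]; exact max_eq_right (by linarith)
      have e5 : max 0 (min c K - max b k) = min c K - b := by
        rw [e1]; exact max_eq_right (by linarith)
      rw [e3, e4, e5]; ring
    · have e1 : min b K = K := min_eq_right h2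
      have e2 : min c K = K := min_eq_right (le_trans h2 hbc)
      have e3 : max 0 (min c K - max b k) = 0 :=
        max_eq_left (by have := le_max_left b k; have := min_le_right c K; linarith)
      rw [e3, e1, e2, add_zero]

lemma interval_telescope (C : ℕ → ℝ) (hC : Monotone C) (K k : ℝ) (hkK : k ≤ K) (T : ℕ) :
    ∑ t ∈ range T, max 0 (min (C (t+1)) K - max (C t) k)
      = max 0 (min (C T) K - max (C 0) k) := by
  induction T with
  | zero =>
    simp only [range_zero, sum_empty]
    refine (max_eq_left ?_).symm
    have h1 := min_le_left (C 0) K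
    have h2 := le_max_left (C 0) k
    linarith
  | succ T ih =>
    rw [sum_range_succ, ih,
      interval_add K k (C 0) (C T) (C (T+1)) (hC (Nat.zero_le T)) (hC (Nat.le_succ T)) hkK]

lemma interval_cover (N : ℕ) (a b : ℝ) (h0 : 0 ≤ a) (hab : a ≤ b) (hbN : b ≤ N) :
    ∑ k ∈ range N, max 0 (min b ((k:ℝ)+1) - max a (k:ℝ)) = b - a := by
  induction N generalizing b with
  | zero =>
    simp only [range_zero, sum_empty, Nat.cast_zero] at *
    linarith
  | succ N ih =>
    rw [sum_range_succ]
    push_cast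
    rcases le_total b N with h1 | h1
    · rw [ih b hab h1]
      have e1 : min b ((N:ℝ)+1) = b := min_eq_left (by linarith)
      have e2 : max a (N:ℝ) = (N:ℝ) := max_eq_right (by linarith)
      have e3 : max 0 (b - (N:ℝ)) = 0 := max_eq_left (by linarith)
      rw [e1, e2, e3, add_zero]
    · rcases le_total a N with h2 | h2
      · have es : ∀ kk ∈ range N, max 0 (min b ((kk:ℝ)+1) - max a (kk:ℝ))
            = max 0 (min (N:ℝ) ((kk:ℝ)+1) - max a (kk:ℝ)) := by
          intro kk hkk
          have hkN : (kk:ℝ)+1 ≤ (N:ℝ) := by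
            have := mem_range.mp hkk
            exact_mod_cast this
          rw [min_eq_right (by linarith), min_eq_right (by linarith)]
        rw [sum_congr rfl es, ih (N:ℝ) h2 le_rfl]
        have e1 : min b ((N:ℝ)+1) = b := min_eq_left (by push_cast at hbN ⊢; linarith)
        have e2 : max a (N:ℝ) = (N:ℝ) := max_eq_right h2
        have e3 : max 0 (b - (N:ℝ)) = b - (N:ℝ) := max_eq_right (by linarith)
        rw [e1, e2, e3]; ring
      · have es : ∀ kk ∈ range N, max 0 (min b ((kk:ℝ)+1) - max a (kk:ℝ)) = 0 := by
          intro kk hkk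
          have hkN : (kk:ℝ)+1 ≤ (N:ℝ) := by
            have := mem_range.mp hkk
            exact_mod_cast this
          refine max_eq_left ?_
          have h3 := min_le_right b ((kk:ℝ)+1)
          have h4 := le_max_left a (kk:ℝ)
          linarith
        rw [sum_congr rfl es, sum_const, smul_zero, zero_add]
        have e1 : min b ((N:ℝ)+1) = b := min_eq_left (by push_cast at hbN ⊢; linarith)
        have e2 : max a (N:ℝ) = a := max_eq_left h2
        have e3 : max 0 (b - a) = b - a := max_eq_right (by linarith)
        rw [e1, e2, e3]

lemma support_nonempty_aux {T : Type*} [Fintype T] [DecidableEq T] [Nonempty T]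
    (M : T → T → ℝ) (hM0 : ∀ s t, 0 ≤ M s t) (hrow : ∀ s, ∑ t, M s t = 1) :
    0 < (univ.filter (fun p : T × T => 0 < M p.1 p.2)).card := by
  obtain ⟨s⟩ := ‹Nonempty T›
  have h1 : (0:ℝ) < ∑ t, M s t := by rw [hrow s]; norm_num
  obtain ⟨t, -, ht⟩ := exists_lt_of_sum_lt (by simpa using h1 :
    ∑ _t ∈ (univ : Finset T), (0:ℝ) < ∑ t, M s t)
  exact card_pos.mpr ⟨(s, t), by simp [ht]⟩

lemma birkhoff_hall {T : Type*} [Fintype T] [DecidableEq T]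
    (M : T → T → ℝ) (hM0 : ∀ s t, 0 ≤ M s t) (hrow : ∀ s, ∑ t, M s t = 1)
    (hcol : ∀ t, ∑ s, M s t = 1) :
    ∃ σ : Equiv.Perm T, ∀ t, 0 < M t (σ t) := by
  have hall : ∀ s : Finset T, s.card ≤ (s.biUnion (fun i => univ.filter (fun t => 0 < M i t))).card := by
    intro s
    set B := s.biUnion (fun i => univ.filter (fun t => 0 < M i t)) with hB
    have key : (s.card : ℝ) ≤ (B.card : ℝ) := by
      have h1 : (s.card : ℝ) = ∑ i ∈ s, ∑ t, M i t := by
        simp [hrow]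
      have h2 : ∀ i ∈ s, ∑ t, M i t = ∑ t ∈ B, M i t := by
        intro i hi
        rw [← sum_subset (subset_univ B)]
        intro t _ htB
        by_contra hne
        exact htB (mem_biUnion.mpr ⟨i, hi, by
          simp [lt_of_le_of_ne (hM0 i t) (Ne.symm hne)]⟩)
      rw [h1, sum_congr rfl h2, sum_comm]
      calc ∑ t ∈ B, ∑ i ∈ s, M i t ≤ ∑ t ∈ B, ∑ i, M i t := by
            refine sum_le_sum (fun t _ => ?_)
            exact sum_le_sum_of_subset_of_nonneg (subset_univ s) (fun i _ _ => hM0 i t)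
        _ = (B.card : ℝ) := by simp [hcol]
    exact_mod_cast key
  obtain ⟨f, hfinj, hf⟩ :=
    (Finset.all_card_le_biUnion_card_iff_exists_injective
      (fun i => univ.filter (fun t => 0 < M i t))).mp hall
  refine ⟨Equiv.ofBijective f ((Finite.injective_iff_bijective).mp hfinj), fun t => ?_⟩
  have := hf t
  simp only [mem_filter] at this
  exact this.2

lemma birkhoff_aux {T : Type*} [Fintype T] [DecidableEq T] :
    ∀ (N : ℕ) (M : T → T → ℝ),
    (univ.filter (fun p : T × T => 0 < M p.1 p.2)).card ≤ N →
    (∀ s t, 0 ≤ M s t) → (∀ s, ∑ t, M s t = 1) → (∀ t, ∑ s, M s t = 1) →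
    ∀ c : T → T → ℝ, ∃ σ : Equiv.Perm T, (∀ t, 0 < M t (σ t)) ∧
      ∑ t, c t (σ t) ≥ ∑ s, ∑ t, M s t * c s t := by
  intro N
  induction N with
  | zero =>
    intro M hcard hM0 hrow hcol c
    cases isEmpty_or_nonempty T with
    | inl h =>
      exact ⟨Equiv.refl T, fun t => (IsEmpty.false t).elim, by simp⟩
    | inr h =>
      have := support_nonempty_aux M hM0 hrow
      omega
  | succ N ih =>
    intro M hcard hM0 hrow hcol c
    cases isEmpty_or_nonempty T with
    | inl h =>
      exact ⟨Equiv.refl T, fun t => (IsEmpty.false t).elim, by simp⟩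
    | inr h =>
      obtain ⟨σ, hσ⟩ := birkhoff_hall M hM0 hrow hcol
      obtain ⟨t₀, -, ht₀⟩ := exists_min_image univ (fun t => M t (σ t)) ⟨Classical.arbitrary T, mem_univ _⟩
      set θ := M t₀ (σ t₀) with hθdef
      have hθ0 : 0 < θ := hσ t₀
      have hθ1 : θ ≤ 1 := by
        have h1 := single_le_sum (f := fun t => M t₀ t) (fun t _ => hM0 t₀ t) (mem_univ (σ t₀))
        rw [hrow t₀] at h1
        exact h1
      rcases eq_or_lt_of_le hθ1 with hθeq | hθlt
      · -- θ = 1 : M is a permutation matrix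
        have hdiag : ∀ t, M t (σ t) = 1 := by
          intro t
          have h1 : (1:ℝ) ≤ M t (σ t) := hθeq ▸ ht₀ t (mem_univ t)
          have h2 := single_le_sum (f := fun u => M t u) (fun u _ => hM0 t u) (mem_univ (σ t))
          rw [hrow t] at h2
          linarith
        have hoff : ∀ t u, u ≠ σ t → M t u = 0 := by
          intro t u hu
          have h1 : ∑ u, M t u = 1 := hrow t
          have h2 : M t (σ t) + ∑ u ∈ univ.erase (σ t), M t u = 1 := by
            rw [add_comm, sum_erase_add univ _ (mem_univ (σ t))]
            exact h1
          have h3 : ∑ u ∈ univ.erase (σ t), M t u = 0 := by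
            rw [hdiag t] at h2; linarith
          have h4 := (sum_eq_zero_iff_of_nonneg (fun u _ => hM0 t u)).mp h3
          exact h4 u (mem_erase.mpr ⟨hu, mem_univ u⟩)
        refine ⟨σ, hσ, le_of_eq ?_⟩
        have : ∀ s, ∑ t, M s t * c s t = c s (σ s) := by
          intro s
          rw [sum_eq_single (σ s) (fun u _ hu => by rw [hoff s u hu, zero_mul])
            (fun hu => absurd (mem_univ _) hu)]
          rw [hdiag s, one_mul]
        rw [sum_congr rfl (fun s _ => this s)]
      · -- θ < 1 : peel off the permutation
        set M' : T → T → ℝ := fun s t => (M s t - θ * (if t = σ s then 1 else 0)) / (1-θ) with hM'def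
        have h1θ : (0:ℝ) < 1 - θ := by linarith
        have hM'0 : ∀ s t, 0 ≤ M' s t := by
          intro s t
          apply div_nonneg _ (le_of_lt h1θ)
          by_cases hts : t = σ s
          · subst hts
            rw [if_pos rfl, mul_one]
            have := ht₀ s (mem_univ s)
            linarith
          · rw [if_neg hts, mul_zero, sub_zero]
            exact hM0 s t
        have hrecon : ∀ s t, M s t = (1-θ) * M' s t + θ * (if t = σ s then 1 else 0) := by
          intro s t
          have hne : (1:ℝ) - θ ≠ 0 := ne_of_gt h1θ
          simp only [hM'def]
          rw [mul_div_assoc', mul_div_cancel_left₀ _ hne]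
          ring
        have hM'row : ∀ s, ∑ t, M' s t = 1 := by
          intro s
          simp only [hM'def]
          rw [← sum_div, sum_sub_distrib, hrow, ← mul_sum]
          rw [sum_ite_eq' univ (σ s) (fun _ => (1:ℝ))]
          simp [mem_univ]
          field_simp
          intro hh; linarith
        have hM'col : ∀ t, ∑ s, M' s t = 1 := by
          intro t
          simp only [hM'def]
          rw [← sum_div, sum_sub_distrib, hcol, ← mul_sum]
          have : ∑ s, (if t = σ s then (1:ℝ) else 0) = 1 := by
            rw [sum_eq_single (σ.symm t)]
            · simp
            · intro s _ hs
              rw [if_neg]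
              intro hts
              exact hs (by rw [hts, Equiv.symm_apply_apply])
            · intro hs; exact absurd (mem_univ _) hs
          rw [this]
          field_simp
        have hsupp : ∀ s t, 0 < M' s t → 0 < M s t := by
          intro s t h
          rw [hrecon s t]
          have h1 : 0 < (1-θ) * M' s t := mul_pos h1θ h
          by_cases hts : t = σ s
          · rw [if_pos hts, mul_one]
            linarith
          · rw [if_neg hts, mul_zero, add_zero]
            linarith
        have hM'diag0 : M' t₀ (σ t₀) = 0 := by
          simp [hM'def]
          exact Or.inl (sub_eq_zero.mpr hθdef.symm)
        have hcard' : (univ.filter (fun p : T × T => 0 < M' p.1 p.2)).card ≤ N := by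
          have hsub : univ.filter (fun p : T × T => 0 < M' p.1 p.2) ⊆
              (univ.filter (fun p : T × T => 0 < M p.1 p.2)).erase (t₀, σ t₀) := by
            intro p hp
            simp only [mem_filter, mem_univ, true_and] at hp
            refine mem_erase.mpr ⟨?_, by simp [hsupp p.1 p.2 hp]⟩
            intro hpe
            rw [hpe] at hp
            simp only at hp
            rw [hM'diag0] at hp
            exact lt_irrefl 0 hp
          have h2 : ((univ.filter (fun p : T × T => 0 < M p.1 p.2)).erase (t₀, σ t₀)).card
              < (univ.filter (fun p : T × T => 0 < M p.1 p.2)).card := by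
            apply card_erase_lt_of_mem
            simp [hσ t₀]
          have := card_le_card hsub
          omega
        obtain ⟨τ, hτpos, hτval⟩ := ih M' hcard' hM'0 hM'row hM'col c
        have hite : ∀ s, ∑ t, (if t = σ s then (1:ℝ) else 0) * c s t = c s (σ s) := by
          intro s
          rw [sum_eq_single (σ s)]
          · rw [if_pos rfl, one_mul]
          · intro t _ ht; rw [if_neg ht, zero_mul]
          · intro ht; exact absurd (mem_univ _) ht
        have hdecomp : ∑ s, ∑ t, M s t * c s t
            = (1-θ) * (∑ s, ∑ t, M' s t * c s t) + θ * (∑ s, c s (σ s)) := by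
          rw [mul_sum, mul_sum, ← sum_add_distrib]
          refine sum_congr rfl (fun s _ => ?_)
          have e : ∑ t, M s t * c s t
              = ∑ t, ((1-θ) * (M' s t * c s t) + θ * ((if t = σ s then 1 else 0) * c s t)) :=
            sum_congr rfl (fun t _ => by rw [hrecon s t]; ring)
          rw [e, sum_add_distrib, ← mul_sum, ← mul_sum, hite s]
        rcases le_total (∑ t, c t (σ t)) (∑ t, c t (τ t)) with hc1 | hc1
        · refine ⟨τ, fun t => hsupp t (τ t) (hτpos t), ?_⟩
          rw [hdecomp]
          have h1 : (1-θ) * (∑ s, ∑ t, M' s t * c s t) ≤ (1-θ) * ∑ t, c t (τ t) :=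
            mul_le_mul_of_nonneg_left hτval (le_of_lt h1θ)
          have h2 : θ * (∑ s, c s (σ s)) ≤ θ * ∑ t, c t (τ t) :=
            mul_le_mul_of_nonneg_left hc1 (le_of_lt hθ0)
          have : (1-θ) * (∑ t, c t (τ t)) + θ * (∑ t, c t (τ t)) = ∑ t, c t (τ t) := by ring
          linarith
        · refine ⟨σ, hσ, ?_⟩
          rw [hdecomp]
          have h1 : (∑ s, ∑ t, M' s t * c s t) ≤ ∑ t, c t (σ t) :=
            le_trans hτval hc1
          have h2 : (1-θ) * (∑ s, ∑ t, M' s t * c s t) ≤ (1-θ) * ∑ t, c t (σ t) :=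
            mul_le_mul_of_nonneg_left h1 (le_of_lt h1θ)
          have : (1-θ) * (∑ t, c t (σ t)) + θ * (∑ t, c t (σ t)) = ∑ t, c t (σ t) := by ring
          linarith

lemma exists_matching_of_fractional {S J : Type*} [Fintype S] [Fintype J]
    [DecidableEq S] [DecidableEq J]
    (A c : S → J → ℝ) (h0 : ∀ s j, 0 ≤ A s j)
    (hrow : ∀ s, ∑ j, A s j ≤ 1) (hcol : ∀ j, ∑ s, A s j ≤ 1) :
    ∃ g : S → Option J, (∀ s j, g s = some j → 0 < A s j) ∧
      (∀ s s' j, g s = some j → g s' = some j → s = s') ∧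
      ∑ s, (g s).elim 0 (fun j => c s j) ≥ ∑ s, ∑ j, A s j * c s j := by
  classical
  set M : (S ⊕ J) → (S ⊕ J) → ℝ := fun x y =>
    match x, y with
    | Sum.inl s, Sum.inr j => A s j
    | Sum.inl s, Sum.inl s' => if s = s' then 1 - ∑ j, A s j else 0
    | Sum.inr j, Sum.inr j' => if j = j' then 1 - ∑ s, A s j else 0
    | Sum.inr j, Sum.inl s => A s j
    with hM
  set C : (S ⊕ J) → (S ⊕ J) → ℝ := fun x y =>
    match x, y with
    | Sum.inl s, Sum.inr j => c s j
    | _, _ => 0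
    with hC
  have hM0 : ∀ x y, 0 ≤ M x y := by
    rintro (s | j) (s' | j')
    · show 0 ≤ if s = s' then 1 - ∑ j, A s j else 0
      split_ifs
      · linarith [hrow s]
      · exact le_rfl
    · exact h0 s j'
    · exact h0 s' j
    · show 0 ≤ if j = j' then 1 - ∑ s, A s j else 0
      split_ifs
      · linarith [hcol j]
      · exact le_rfl
  have hMrow : ∀ x, ∑ y, M x y = 1 := by
    rintro (s | j) <;> rw [Fintype.sum_sum_type]
    · have e1 : ∑ s', M (Sum.inl s) (Sum.inl s') = 1 - ∑ j, A s j := by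
        show (∑ s' : S, if s = s' then 1 - ∑ j, A s j else 0) = _
        rw [sum_ite_eq univ s (fun _ => 1 - ∑ j, A s j)]
        simp
      have e2 : ∑ j, M (Sum.inl s) (Sum.inr j) = ∑ j, A s j := rfl
      rw [e1, e2]; ring
    · have e1 : ∑ s, M (Sum.inr j) (Sum.inl s) = ∑ s, A s j := rfl
      have e2 : ∑ j', M (Sum.inr j) (Sum.inr j') = 1 - ∑ s, A s j := by
        show (∑ j' : J, if j = j' then 1 - ∑ s, A s j else 0) = _
        rw [sum_ite_eq univ j (fun _ => 1 - ∑ s, A s j)]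
        simp
      rw [e1, e2]; ring
  have hMcol : ∀ y, ∑ x, M x y = 1 := by
    rintro (s | j) <;> rw [Fintype.sum_sum_type]
    · have e1 : ∑ s', M (Sum.inl s') (Sum.inl s) = 1 - ∑ j, A s j := by
        show (∑ s' : S, if s' = s then 1 - ∑ j, A s' j else 0) = _
        rw [sum_ite_eq' univ s (fun s' => 1 - ∑ j, A s' j)]
        simp
      have e2 : ∑ j, M (Sum.inr j) (Sum.inl s) = ∑ j, A s j := rfl
      rw [e1, e2]; ring
    · have e1 : ∑ s, M (Sum.inl s) (Sum.inr j) = ∑ s, A s j := rfl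
      have e2 : ∑ j', M (Sum.inr j') (Sum.inr j) = 1 - ∑ s, A s j := by
        show (∑ j' : J, if j' = j then 1 - ∑ s, A s j' else 0) = _
        rw [sum_ite_eq' univ j (fun j' => 1 - ∑ s, A s j')]
        simp
      rw [e1, e2]; ring
  obtain ⟨σ, hσpos, hσval⟩ := birkhoff_aux (univ.filter
      (fun p : (S⊕J) × (S⊕J) => 0 < M p.1 p.2)).card M le_rfl hM0 hMrow hMcol C
  have hMC : ∑ x, ∑ y, M x y * C x y = ∑ s, ∑ j, A s j * c s j := by
    rw [Fintype.sum_sum_type]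
    have e2 : ∑ j : J, ∑ y, M (Sum.inr j) y * C (Sum.inr j) y = 0 := by
      refine sum_eq_zero (fun j _ => sum_eq_zero (fun y _ => ?_))
      rcases y with s | j' <;> simp [hC]
    rw [e2, add_zero]
    refine sum_congr rfl (fun s _ => ?_)
    rw [Fintype.sum_sum_type]
    have e3 : ∑ s' : S, M (Sum.inl s) (Sum.inl s') * C (Sum.inl s) (Sum.inl s') = 0 := by
      refine sum_eq_zero (fun s' _ => ?_)
      simp [hC]
    rw [e3, zero_add]
  set g : S → Option J := fun s =>
    match σ (Sum.inl s) with
    | Sum.inr j => some j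
    | Sum.inl _ => none
    with hg
  have gdef : ∀ s j, g s = some j ↔ σ (Sum.inl s) = Sum.inr j := by
    intro s j
    rcases h : σ (Sum.inl s) with a | j' <;> simp [hg, h]
  refine ⟨g, ?_, ?_, ?_⟩
  · intro s j hgs
    have h1 := (gdef s j).mp hgs
    have h2 := hσpos (Sum.inl s)
    rw [h1] at h2
    exact h2
  · intro s s' j hgs hgs'
    have h1 := (gdef s j).mp hgs
    have h2 := (gdef s' j).mp hgs'
    have := σ.injective (h1.trans h2.symm)
    exact Sum.inl_injective this
  · rw [hMC] at hσval
    refine le_trans hσval (le_of_eq ?_)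
    rw [Fintype.sum_sum_type]
    have e2 : ∑ j : J, C (Sum.inr j) (σ (Sum.inr j)) = 0 := by
      refine sum_eq_zero (fun j _ => ?_)
      rcases hy : σ (Sum.inr j) with a | j' <;> simp [hC, hy]
    rw [e2, add_zero]
    refine sum_congr rfl (fun s _ => ?_)
    rcases hy : σ (Sum.inl s) with s' | j'
    · have h3 : g s = none := by simp [hg, hy]
      rw [h3]
      rfl
    · have h3 : g s = some j' := (gdef s j').mpr hy
      rw [h3]
      rfl

noncomputable def sortP (m : ℕ) (vv : Fin m → ℝ) : Equiv.Perm (Fin m) :=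
  Tuple.sort (fun j => -vv j)

noncomputable def xpos (m : ℕ) (x vv : Fin m → ℝ) (t : ℕ) : ℝ :=
  if h : t < m then x (sortP m vv ⟨t, h⟩) else 0

noncomputable def csum (m : ℕ) (x vv : Fin m → ℝ) (t : ℕ) : ℝ :=
  ∑ s ∈ Finset.range t, xpos m x vv s

noncomputable def bwp (m : ℕ) (x vv : Fin m → ℝ) (t : ℕ) (r : ℝ) : ℝ :=
  max 0 (min (csum m x vv (t+1)) (r+1) - max (csum m x vv t) r)

noncomputable def bw (m : ℕ) (x vv : Fin m → ℝ) (j : Fin m) (r : ℝ) : ℝ :=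
  bwp m x vv (((sortP m vv).symm j : Fin m) : ℕ) r

section Bucket

variable {m : ℕ} {x vv : Fin m → ℝ}

lemma bw_nonneg (j : Fin m) (r : ℝ) : 0 ≤ bw m x vv j r := le_max_left _ _

lemma xpos_nonneg (hx : ∀ j, 0 ≤ x j) (t : ℕ) : 0 ≤ xpos m x vv t := by
  unfold xpos
  split_ifs
  · exact hx _
  · exact le_rfl

lemma csum_nonneg (hx : ∀ j, 0 ≤ x j) (t : ℕ) : 0 ≤ csum m x vv t :=
  sum_nonneg (fun s _ => xpos_nonneg hx s)

lemma csum_mono (hx : ∀ j, 0 ≤ x j) : Monotone (csum m x vv) := by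
  intro a b hab
  exact sum_le_sum_of_subset_of_nonneg (range_subset_range.mpr hab) (fun s _ _ => xpos_nonneg hx s)

lemma csum_le (hx : ∀ j, 0 ≤ x j ∧ x j ≤ 1) (t : ℕ) : csum m x vv t ≤ m := by
  have h1 : ∀ s ∈ range t, xpos m x vv s ≤ if s < m then 1 else 0 := by
    intro s _
    unfold xpos
    split_ifs with h
    · exact (hx _).2
    · exact le_rfl
  calc csum m x vv t ≤ ∑ s ∈ range t, if s < m then (1:ℝ) else 0 := sum_le_sum h1
    _ = #((range t).filter (fun s => s < m)) := by rw [sum_boole]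
    _ ≤ #(range m) := by
        have : (range t).filter (fun s => s < m) ⊆ range m := by
          intro s hs
          simp only [mem_filter, mem_range] at hs ⊢
          exact hs.2
        exact_mod_cast card_le_card this
    _ = m := by rw [card_range]

/-- the bucket weights of an item sum to its fractional weight -/
lemma bw_total (hx : ∀ j, 0 ≤ x j ∧ x j ≤ 1) (j : Fin m) :
    ∑ k ∈ range m, bw m x vv j ((k:ℕ):ℝ) = x j := by
  set t : Fin m := (sortP m vv).symm j with ht
  have hxj : xpos m x vv (t:ℕ) = x j := by
    unfold xpos
    rw [dif_pos t.isLt]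
    congr 1
    rw [ht]
    simp [Fin.eta]
  have h1 : csum m x vv ((t:ℕ)+1) = csum m x vv (t:ℕ) + x j := by
    unfold csum
    rw [sum_range_succ, hxj]
  unfold bw bwp
  rw [← ht]
  have h0 : 0 ≤ csum m x vv (t:ℕ) := csum_nonneg (fun j => (hx j).1) _
  have hab : csum m x vv (t:ℕ) ≤ csum m x vv ((t:ℕ)+1) := by
    rw [h1]; linarith [(hx j).1]
  have hbN : csum m x vv ((t:ℕ)+1) ≤ m := csum_le hx _
  have := interval_cover m (csum m x vv (t:ℕ)) (csum m x vv ((t:ℕ)+1)) h0 hab hbN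
  rw [this, h1]
  ring

/-- row sums: each bucket holds at most one unit -/
lemma bw_rowsum (hx : ∀ j, 0 ≤ x j ∧ x j ≤ 1) (r : ℝ) :
    ∑ j, bw m x vv j r = max 0 (min (csum m x vv m) (r+1) - max 0 r) := by
  have h1 : ∑ j, bw m x vv j r = ∑ t : Fin m, bwp m x vv (t:ℕ) r := by
    unfold bw
    exact Equiv.sum_comp (sortP m vv).symm (fun t : Fin m => bwp m x vv (t:ℕ) r)
  rw [h1]
  rw [Fin.sum_univ_eq_sum_range (fun t => bwp m x vv t r) m]
  unfold bwp
  rw [interval_telescope (csum m x vv) (csum_mono (fun j => (hx j).1)) (r+1) r (by linarith) m]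
  have h2 : csum m x vv 0 = 0 := by
    unfold csum
    simp
  rw [h2]

lemma bw_rowsum_le_one (hx : ∀ j, 0 ≤ x j ∧ x j ≤ 1) (r : ℝ) (hr : 0 ≤ r) :
    ∑ j, bw m x vv j r ≤ 1 := by
  rw [bw_rowsum hx r]
  have h1 : min (csum m x vv m) (r+1) ≤ r + 1 := min_le_right _ _
  have h2 : max 0 r = r := max_eq_right hr
  rw [h2]
  rw [max_le_iff]
  constructor <;> linarith

lemma bw_pos_csum (hx : ∀ j, 0 ≤ x j) {j : Fin m} {r : ℝ} (h : 0 < bw m x vv j r) :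
    r < csum m x vv m := by
  unfold bw bwp at h
  rcases lt_max_iff.mp h with h' | h'
  · exact absurd h' (lt_irrefl 0)
  have h1 : max (csum m x vv (((sortP m vv).symm j : Fin m):ℕ)) r
      < min (csum m x vv ((((sortP m vv).symm j : Fin m):ℕ)+1)) (r+1) := by linarith
  have h2 : r < csum m x vv ((((sortP m vv).symm j : Fin m):ℕ)+1) :=
    lt_of_le_of_lt (le_max_right _ _) (lt_of_lt_of_le h1 (min_le_left _ _))
  have h3 : csum m x vv ((((sortP m vv).symm j : Fin m):ℕ)+1) ≤ csum m x vv m :=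
    csum_mono hx (Nat.succ_le_of_lt (Fin.is_lt _))
  exact lt_of_lt_of_le h2 h3

lemma bw_pos_lt {j : Fin m} {r : ℝ} (h : 0 < bw m x vv j r) :
    max (csum m x vv (((sortP m vv).symm j : Fin m):ℕ)) r
      < min (csum m x vv ((((sortP m vv).symm j : Fin m):ℕ)+1)) (r+1) := by
  unfold bw bwp at h
  rcases lt_max_iff.mp h with h' | h'
  · exact absurd h' (lt_irrefl 0)
  · linarith

/-- if bucket `r ≥ 1` is nonempty, bucket `r-1` is exactly full -/
lemma bw_full (hx : ∀ j, 0 ≤ x j ∧ x j ≤ 1) {j : Fin m} {r : ℝ} (hr : 1 ≤ r)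
    (h : 0 < bw m x vv j r) : ∑ j', bw m x vv j' (r-1) = 1 := by
  rw [bw_rowsum hx (r-1)]
  have h1 : r < csum m x vv m := bw_pos_csum (fun j => (hx j).1) h
  have e1 : min (csum m x vv m) (r-1+1) = r-1+1 := min_eq_right (by linarith)
  have e2 : max 0 (r-1) = r-1 := max_eq_right (by linarith)
  rw [e1, e2, max_eq_right (by linarith)]
  ring

/-- items in bucket `r` have `vv`-value at most that of items in bucket `r-1` -/
lemma bw_mono (hx : ∀ j, 0 ≤ x j) {j j' : Fin m} {r : ℝ}
    (h : 0 < bw m x vv j r) (h' : 0 < bw m x vv j' (r-1)) : vv j ≤ vv j' := by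
  have hk := bw_pos_lt h
  have hk' := bw_pos_lt h'
  set t := (sortP m vv).symm j with htd
  set t' := (sortP m vv).symm j' with htd'
  have h2 : r < csum m x vv ((t:ℕ)+1) :=
    lt_of_le_of_lt (le_max_right _ _) (lt_of_lt_of_le hk (min_le_left _ _))
  have h3 : csum m x vv (t':ℕ) < r := by
    have := lt_of_le_of_lt (le_max_left _ _) (lt_of_lt_of_le hk' (min_le_left _ _))
    have h4 := lt_of_le_of_lt (le_max_left (csum m x vv (t':ℕ)) (r-1))
      (lt_of_lt_of_le hk' (min_le_right _ _))
    linarith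
  have h4 : csum m x vv (t':ℕ) < csum m x vv ((t:ℕ)+1) := lt_trans h3 h2
  have h5 : (t':ℕ) < (t:ℕ)+1 := by
    by_contra hc
    push_neg at hc
    exact absurd (csum_mono hx hc) (not_le.mpr h4)
  have h6 : t' ≤ t := Fin.le_def.mpr (Nat.lt_succ_iff.mp h5)
  have h7 : -vv (sortP m vv t') ≤ -vv (sortP m vv t) :=
    Tuple.monotone_sort (fun j => -vv j) h6
  rw [htd, htd', Equiv.apply_symm_apply, Equiv.apply_symm_apply] at h7
  linarith

end Bucket

/-- Rounding the BAVWM LP: any feasible fractional solution can be rounded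
to an integral one with at least the same split objective, violating each budget by at
most a factor of 2. -/
theorem bavwm_lp_rounding (n m : ℕ)
    (b : Fin n → ℝ) (v : Fin n → Fin m → ℝ) (μ : Fin n → ℝ) (w : Fin n → Fin m → ℝ)
    (hb : ∀ i, 0 ≤ b i) (hv : ∀ i j, 0 ≤ v i j ∧ v i j ≤ b i) (hμ : ∀ i, 0 ≤ μ i)
    (xb xh : Fin n → Fin m → ℝ)
    (hxb01 : ∀ i j, 0 ≤ xb i j ∧ xb i j ≤ 1) (hxh01 : ∀ i j, 0 ≤ xh i j ∧ xh i j ≤ 1)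
    (hfeas : ∀ j, ∑ i, (xb i j + xh i j) ≤ 1)
    (hbud : ∀ i, ∑ j, xb i j * v i j ≤ b i) :
    ∃ yb yh : Fin n → Fin m → ℝ,
      (∀ i j, yb i j = 0 ∨ yb i j = 1) ∧ (∀ i j, yh i j = 0 ∨ yh i j = 1) ∧
      (∀ j, ∑ i, (yb i j + yh i j) ≤ 1) ∧
      (∀ i, ∑ j, yb i j * v i j ≤ 2 * b i) ∧
      (∑ i, ∑ j, μ i * yb i j * v i j) + (∑ i, ∑ j, w i j * (yb i j + yh i j)) ≥
        (∑ i, ∑ j, μ i * xb i j * v i j) + ∑ i, ∑ j, w i j * (xb i j + xh i j) := by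
  classical
  rcases Nat.eq_zero_or_pos m with hm0 | hm0
  · subst hm0
    refine ⟨fun _ _ => 0, fun _ _ => 0, fun i j => Or.inl rfl, fun i j => Or.inl rfl,
      fun j => j.elim0, fun i => ?_, ?_⟩
    · simp only [Fin.sum_univ_zero, zero_mul]
      have := hb i
      have : (0:ℝ) ≤ 2 * b i := by linarith
      simpa using this
    · simp
  obtain ⟨m', rfl⟩ : ∃ m', m = m' + 1 := ⟨m - 1, (Nat.succ_pred_eq_of_pos hm0).symm⟩
  -- the slot-item fractional assignment matrix
  set A : ((Fin n × Fin (m'+1)) ⊕ (Fin n × Fin (m'+1))) → Fin (m'+1) → ℝ := fun s j =>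
    match s with
    | Sum.inl (i, k) => bw (m'+1) (xb i) (v i) j ((k:ℕ):ℝ)
    | Sum.inr (i, j') => if j = j' then xh i j else 0
    with hA
  set c : ((Fin n × Fin (m'+1)) ⊕ (Fin n × Fin (m'+1))) → Fin (m'+1) → ℝ := fun s j =>
    match s with
    | Sum.inl (i, _) => μ i * v i j + w i j
    | Sum.inr (i, _) => w i j
    with hc
  have hA0 : ∀ s j, 0 ≤ A s j := by
    rintro (⟨i, k⟩ | ⟨i, j'⟩) j
    · exact bw_nonneg j _
    · show 0 ≤ if j = j' then xh i j else 0
      split_ifs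
      · exact (hxh01 i j).1
      · exact le_rfl
  have hArow : ∀ s, ∑ j, A s j ≤ 1 := by
    rintro (⟨i, k⟩ | ⟨i, j'⟩)
    · exact bw_rowsum_le_one (hxb01 i) _ (Nat.cast_nonneg _)
    · show (∑ j, if j = j' then xh i j else 0) ≤ 1
      rw [sum_ite_eq' univ j' (fun j => xh i j)]
      simp only [mem_univ, if_true]
      exact (hxh01 i j').2
  have hAcol : ∀ j, ∑ s, A s j ≤ 1 := by
    intro j
    rw [Fintype.sum_sum_type]
    have e1 : ∑ p : Fin n × Fin (m'+1), A (Sum.inl p) j = ∑ i, xb i j := by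
      rw [Fintype.sum_prod_type]
      refine sum_congr rfl (fun i _ => ?_)
      have : ∀ k : Fin (m'+1), A (Sum.inl (i, k)) j = bw (m'+1) (xb i) (v i) j ((k:ℕ):ℝ) := fun k => rfl
      rw [sum_congr rfl (fun k _ => this k)]
      rw [Fin.sum_univ_eq_sum_range (fun k => bw (m'+1) (xb i) (v i) j ((k:ℕ):ℝ)) (m'+1)]
      exact bw_total (hxb01 i) j
    have e2 : ∑ p : Fin n × Fin (m'+1), A (Sum.inr p) j = ∑ i, xh i j := by
      rw [Fintype.sum_prod_type]
      refine sum_congr rfl (fun i _ => ?_)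
      show (∑ j' : Fin (m'+1), if j = j' then xh i j else 0) = xh i j
      rw [sum_ite_eq univ j (fun _ => xh i j)]
      simp
    rw [e1, e2, ← sum_add_distrib]
    exact hfeas j
  obtain ⟨g, hgpos, hginj, hgval⟩ := exists_matching_of_fractional A c hA0 hArow hAcol
  set yb : Fin n → Fin (m'+1) → ℝ := fun i j =>
    if ∃ k, g (Sum.inl (i, k)) = some j then 1 else 0 with hyb
  set yh : Fin n → Fin (m'+1) → ℝ := fun i j =>
    if g (Sum.inr (i, j)) = some j then 1 else 0 with hyh
  -- yb as a sum of indicators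
  have hybeq : ∀ i j, yb i j = ∑ k : Fin (m'+1), (if g (Sum.inl (i,k)) = some j then (1:ℝ) else 0) := by
    intro i j
    simp only [hyb]
    by_cases hex : ∃ k, g (Sum.inl (i, k)) = some j
    · obtain ⟨k₀, hk₀⟩ := hex
      rw [if_pos ⟨k₀, hk₀⟩]
      rw [eq_comm]
      rw [sum_eq_single k₀]
      · rw [if_pos hk₀]
      · intro k _ hk
        rw [if_neg]
        intro hgk
        exact hk (by
          have := hginj _ _ _ hgk hk₀
          have := Sum.inl_injective this
          exact (Prod.mk.injEq _ _ _ _ ▸ this).2 ▸ rfl)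
      · intro hk
        exact absurd (mem_univ k₀) hk
    · rw [if_neg hex]
      rw [eq_comm]
      exact sum_eq_zero (fun k _ => if_neg (fun h => hex ⟨k, h⟩))
  -- 0/1-valuedness
  have h01b : ∀ i j, yb i j = 0 ∨ yb i j = 1 := by
    intro i j
    simp only [hyb]
    split_ifs
    · exact Or.inr rfl
    · exact Or.inl rfl
  have h01h : ∀ i j, yh i j = 0 ∨ yh i j = 1 := by
    intro i j
    simp only [hyh]
    split_ifs
    · exact Or.inr rfl
    · exact Or.inl rfl
  -- per-item feasibility
  have hitem : ∀ j, ∑ i, (yb i j + yh i j) ≤ 1 := by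
    intro j
    have h2 : ∑ i, (yb i j + yh i j)
        = (∑ i, ∑ k : Fin (m'+1), if g (Sum.inl (i,k)) = some j then (1:ℝ) else 0)
          + ∑ i, (if g (Sum.inr (i,j)) = some j then (1:ℝ) else 0) := by
      rw [← sum_add_distrib]
      refine sum_congr rfl (fun i _ => ?_)
      rw [hybeq i j]
    have h3 : ∑ i, (if g (Sum.inr (i,j)) = some j then (1:ℝ) else 0)
        ≤ ∑ i, ∑ j' : Fin (m'+1), (if g (Sum.inr (i,j')) = some j then (1:ℝ) else 0) := by
      refine sum_le_sum (fun i _ => ?_)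
      refine single_le_sum (f := fun j' => if g (Sum.inr (i,j')) = some j then (1:ℝ) else 0)
        (fun j' _ => by
          show (0:ℝ) ≤ if g (Sum.inr (i, j')) = some j then 1 else 0
          split_ifs <;> norm_num) (mem_univ j)
    have h4 : (∑ i, ∑ k : Fin (m'+1), if g (Sum.inl (i,k)) = some j then (1:ℝ) else 0)
          + ∑ i, ∑ j' : Fin (m'+1), (if g (Sum.inr (i,j')) = some j then (1:ℝ) else 0)
        = ∑ s, (if g s = some j then (1:ℝ) else 0) := by
      rw [Fintype.sum_sum_type, Fintype.sum_prod_type, Fintype.sum_prod_type]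
    have h5 : ∑ s, (if g s = some j then (1:ℝ) else 0) ≤ 1 := by
      rw [sum_boole]
      have hcle : #(univ.filter (fun s => g s = some j)) ≤ 1 := by
        refine card_le_one.mpr (fun a ha b hb => ?_)
        simp only [mem_filter] at ha hb
        exact hginj a b j ha.2 hb.2
      exact_mod_cast hcle
    linarith
  -- budget feasibility
  have hbudget : ∀ i, ∑ j, yb i j * v i j ≤ 2 * b i := by
    intro i
    set ch : Fin (m'+1) → ℝ := fun k =>
      ∑ j, (if g (Sum.inl (i,k)) = some j then (1:ℝ) else 0) * v i j with hch
    set L : ℝ → ℝ := fun r => ∑ j, bw (m'+1) (xb i) (v i) j r * v i j with hL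
    have h1 : ∑ j, yb i j * v i j = ∑ k : Fin (m'+1), ch k := by
      simp only [hch]
      rw [sum_comm]
      refine sum_congr rfl (fun j _ => ?_)
      rw [hybeq i j, sum_mul]
    have hch_cases : ∀ k, ch k = 0 ∨ ∃ j₀, g (Sum.inl (i,k)) = some j₀ ∧ ch k = v i j₀ := by
      intro k
      rcases hgk : g (Sum.inl (i,k)) with _ | j₀
      · left
        refine sum_eq_zero (fun j _ => ?_)
        rw [hgk, if_neg (by simp), zero_mul]
      · right
        refine ⟨j₀, rfl, ?_⟩
        simp only [hch]
        rw [sum_eq_single j₀]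
        · rw [hgk, if_pos rfl, one_mul]
        · intro j _ hj
          rw [hgk, if_neg (fun h => hj (Option.some_injective _ h).symm ), zero_mul]
        · intro hj
          exact absurd (mem_univ j₀) hj
    have hL0 : ∀ r : ℝ, 0 ≤ L r := by
      intro r
      exact sum_nonneg (fun j _ => mul_nonneg (bw_nonneg j r) (hv i j).1)
    have hch0 : ch 0 ≤ b i := by
      rcases hch_cases 0 with h | ⟨j₀, _, h⟩
      · rw [h]; exact hb i
      · rw [h]; exact (hv i j₀).2
    have hchS : ∀ k : Fin m', ch k.succ ≤ L ((k:ℕ):ℝ) := by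
      intro k
      rcases hch_cases k.succ with h | ⟨j₀, hg0, h⟩
      · rw [h]; exact hL0 _
      · rw [h]
        have hpos : 0 < bw (m'+1) (xb i) (v i) j₀ (((k.succ:Fin (m'+1)):ℕ):ℝ) := hgpos _ _ hg0
        have hcast : (((k.succ:Fin (m'+1)):ℕ):ℝ) = ((k:ℕ):ℝ) + 1 := by
          rw [Fin.val_succ]
          push_cast
          ring
        rw [hcast] at hpos
        have hfull : ∑ j', bw (m'+1) (xb i) (v i) j' (((k:ℕ):ℝ) + 1 - 1) = 1 :=
          bw_full (hxb01 i) (by have := Nat.cast_nonneg (α := ℝ) (k:ℕ); linarith) hpos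
        have hmono : ∀ j', 0 < bw (m'+1) (xb i) (v i) j' (((k:ℕ):ℝ) + 1 - 1) → v i j₀ ≤ v i j' :=
          fun j' h' => bw_mono (fun j => (hxb01 i j).1) hpos h'
        have harg : ((k:ℕ):ℝ) + 1 - 1 = ((k:ℕ):ℝ) := by ring
        rw [harg] at hfull hmono
        have hv0 : v i j₀ = ∑ j', bw (m'+1) (xb i) (v i) j' ((k:ℕ):ℝ) * v i j₀ := by
          rw [← sum_mul, hfull, one_mul]
        rw [hv0]
        refine sum_le_sum (fun j' _ => ?_)
        rcases eq_or_lt_of_le (bw_nonneg (m := m'+1) (x := xb i) (vv := v i) j' ((k:ℕ):ℝ))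
          with hbw | hbw
        · rw [← hbw, zero_mul, zero_mul]
        · exact mul_le_mul_of_nonneg_left (hmono j' hbw) (le_of_lt hbw)
    have htot : ∑ k : Fin (m'+1), L ((k:ℕ):ℝ) ≤ b i := by
      have e : ∑ k : Fin (m'+1), L ((k:ℕ):ℝ) = ∑ j, xb i j * v i j := by
        simp only [hL]
        rw [sum_comm]
        refine sum_congr rfl (fun j _ => ?_)
        rw [← sum_mul]
        congr 1
        rw [Fin.sum_univ_eq_sum_range (fun k => bw (m'+1) (xb i) (v i) j ((k:ℕ):ℝ)) (m'+1)]
        exact bw_total (hxb01 i) j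
      rw [e]
      exact hbud i
    have hcs : ∑ k : Fin m', L ((k:ℕ):ℝ) ≤ ∑ k : Fin (m'+1), L ((k:ℕ):ℝ) := by
      rw [Fin.sum_univ_castSucc (f := fun k : Fin (m'+1) => L ((k:ℕ):ℝ))]
      have e : ∀ k : Fin m', L (((k.castSucc : Fin (m'+1)):ℕ):ℝ) = L ((k:ℕ):ℝ) := by
        intro k
        congr 1
      rw [sum_congr rfl (fun k _ => e k)]
      have := hL0 (((Fin.last m' : Fin (m'+1)):ℕ):ℝ)
      linarith
    calc ∑ j, yb i j * v i j = ∑ k : Fin (m'+1), ch k := h1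
      _ = ch 0 + ∑ k : Fin m', ch k.succ := Fin.sum_univ_succ ch
      _ ≤ b i + ∑ k : Fin m', L ((k:ℕ):ℝ) := add_le_add hch0 (sum_le_sum (fun k _ => hchS k))
      _ ≤ b i + b i := add_le_add_right (le_trans hcs htot) _
      _ = 2 * b i := by ring
  -- objective value
  have eL : (∑ i, ∑ j, μ i * yb i j * v i j) + (∑ i, ∑ j, w i j * (yb i j + yh i j))
      = ∑ s, (g s).elim 0 (fun j => c s j) := by
    have e1 : ∀ i, (∑ j, μ i * yb i j * v i j) + (∑ j, w i j * (yb i j + yh i j))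
        = (∑ j, (μ i * v i j + w i j) * yb i j) + ∑ j, w i j * yh i j := by
      intro i
      rw [← sum_add_distrib, ← sum_add_distrib]
      exact sum_congr rfl (fun j _ => by ring)
    rw [← sum_add_distrib, sum_congr rfl (fun i _ => e1 i), sum_add_distrib]
    have ebar : ∑ i, ∑ j, (μ i * v i j + w i j) * yb i j
        = ∑ p : Fin n × Fin (m'+1), (g (Sum.inl p)).elim 0 (fun j => c (Sum.inl p) j) := by
      rw [Fintype.sum_prod_type]
      refine sum_congr rfl (fun i _ => ?_)
      have h2 : ∀ j, (μ i * v i j + w i j) * yb i j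
          = ∑ k : Fin (m'+1), (if g (Sum.inl (i,k)) = some j then (1:ℝ) else 0)
              * (μ i * v i j + w i j) := by
        intro j
        rw [mul_comm, hybeq i j, sum_mul]
      rw [sum_congr rfl (fun j _ => h2 j), sum_comm]
      refine sum_congr rfl (fun k _ => ?_)
      rcases hgk : g (Sum.inl (i,k)) with _ | j₀
      · refine Eq.trans (sum_eq_zero (fun j _ => ?_)) rfl
        rw [if_neg (by simp), zero_mul]
      · rw [sum_eq_single j₀]
        · rw [if_pos rfl, one_mul]
          rfl
        · intro j _ hj
          rw [if_neg (fun h => hj (Option.some_injective _ h).symm), zero_mul]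
        · intro hj
          exact absurd (mem_univ j₀) hj
    have ehat : ∑ i, ∑ j, w i j * yh i j
        = ∑ p : Fin n × Fin (m'+1), (g (Sum.inr p)).elim 0 (fun j => c (Sum.inr p) j) := by
      rw [Fintype.sum_prod_type]
      refine sum_congr rfl (fun i _ => sum_congr rfl (fun j' _ => ?_))
      rcases hgk : g (Sum.inr (i,j')) with _ | j₀
      · have hz : yh i j' = 0 := by simp [hyh, hgk]
        rw [hz, mul_zero]
        rfl
      · have hj0 : j₀ = j' := by
          have hp := hgpos _ _ hgk
          by_contra hne
          have hz : A (Sum.inr (i,j')) j₀ = 0 := if_neg hne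
          rw [hz] at hp
          exact lt_irrefl 0 hp
        subst hj0
        have hz : yh i j₀ = 1 := by simp [hyh, hgk]
        rw [hz, mul_one]
        rfl
    rw [ebar, ehat, Fintype.sum_sum_type]
  have eR : ∑ s, ∑ j, A s j * c s j
      = (∑ i, ∑ j, μ i * xb i j * v i j) + ∑ i, ∑ j, w i j * (xb i j + xh i j) := by
    rw [Fintype.sum_sum_type, Fintype.sum_prod_type, Fintype.sum_prod_type]
    have e1 : ∀ i, ∑ k : Fin (m'+1), ∑ j, A (Sum.inl (i,k)) j * c (Sum.inl (i,k)) j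
        = ∑ j, xb i j * (μ i * v i j + w i j) := by
      intro i
      rw [sum_comm]
      refine sum_congr rfl (fun j _ => ?_)
      have h3 : ∀ k : Fin (m'+1), A (Sum.inl (i,k)) j * c (Sum.inl (i,k)) j
          = bw (m'+1) (xb i) (v i) j ((k:ℕ):ℝ) * (μ i * v i j + w i j) := fun k => rfl
      rw [sum_congr rfl (fun k _ => h3 k), ← sum_mul]
      congr 1
      rw [Fin.sum_univ_eq_sum_range (fun k => bw (m'+1) (xb i) (v i) j ((k:ℕ):ℝ)) (m'+1)]
      exact bw_total (hxb01 i) j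
    have e2 : ∀ i, ∑ j' : Fin (m'+1), ∑ j, A (Sum.inr (i,j')) j * c (Sum.inr (i,j')) j
        = ∑ j', xh i j' * w i j' := by
      intro i
      refine sum_congr rfl (fun j' _ => ?_)
      rw [sum_eq_single j']
      · show (if j' = j' then xh i j' else 0) * w i j' = xh i j' * w i j'
        rw [if_pos rfl]
      · intro j _ hj
        show (if j = j' then xh i j else 0) * w i j = 0
        rw [if_neg hj, zero_mul]
      · intro h
        exact absurd (mem_univ j') h
    rw [sum_congr rfl (fun i _ => e1 i), sum_congr rfl (fun i _ => e2 i)]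
    have e3 : ∀ i, (∑ j, xb i j * (μ i * v i j + w i j)) + ∑ j, xh i j * w i j
        = (∑ j, μ i * xb i j * v i j) + ∑ j, w i j * (xb i j + xh i j) := by
      intro i
      rw [← sum_add_distrib, ← sum_add_distrib]
      exact sum_congr rfl (fun j _ => by ring)
    rw [← sum_add_distrib, sum_congr rfl (fun i _ => e3 i), sum_add_distrib]
  refine ⟨yb, yh, h01b, h01h, hitem, hbudget, ?_⟩
  rw [eL, ← eR]
  exact hgval
end

section
/- Let there be n bidders and m items with real numbers b_i ≥ 0, v_{ij} with 0 ≤ v_{ij} ≤ b_i, m_i ≥ 0, and w_{ij} ∈ ℝ. Suppose x̄, x̂ ∈ [0,1]^{n×m} satisfy Σ_i (x̄_{ij} + x̂_{ij}) ≤ 1 for all items j and Σ_j x̄_{ij} v_{ij} ≤ b_i for all bidders i. Then there exists an integral allocation y ∈ {0,1}^{n×m} with Σ_i y_{ij} ≤ 1 for all j such that Σ_i m_i · min(b_i, Σ_j y_{ij} v_{ij}) + Σ_{i,j} y_{ij} w_{ij} ≥ (1/3) · ( Σ_{i,j} m_i x̄_{ij} v_{ij} + Σ_{i,j} w_{ij}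 (x̄_{ij} + x̂_{ij}) ). In particular, the integrality gap of the LP relaxation of Budgeted-Additive Virtual Welfare Maximization is at most 3. -/
open Finset

noncomputable def clampR (lo hi x : ℝ) : ℝ := min hi (max lo x)

lemma clampR_mono (lo hi : ℝ) : Monotone (clampR lo hi) := fun x y hxy =>
  min_le_min le_rfl (max_le_max le_rfl hxy)

lemma clampR_le_hi (lo hi x : ℝ) (h : lo ≤ hi) : clampR lo hi x ≤ hi := min_le_left _ _

lemma clampR_ge_lo (lo hi x : ℝ) (h : lo ≤ hi) : lo ≤ clampR lo hi x :=
  le_min h (le_max_left _ _)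

lemma clampR_of_le (lo hi x : ℝ) (h1 : lo ≤ x) (h2 : x ≤ hi) : clampR lo hi x = x := by
  unfold clampR
  rw [max_eq_right h1, min_eq_right h2]

lemma clampR_of_ge (lo hi x : ℝ) (h : hi ≤ x) (h2 : lo ≤ hi) : clampR lo hi x = hi := by
  unfold clampR
  rw [min_eq_left]
  exact le_max_of_le_right h

lemma clampR_of_lo (lo hi x : ℝ) (h : x ≤ lo) (h2 : lo ≤ hi) : clampR lo hi x = lo := by
  unfold clampR
  rw [max_eq_left h, min_eq_right h2]

/-- overlap symmetry identity -/
lemma clampR_swap (a bb lo hi : ℝ) (hab : a ≤ bb) (hlh : lo ≤ hi) :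
    clampR lo hi bb - clampR lo hi a = clampR a bb hi - clampR a bb lo := by
  rcases le_total bb lo with h1 | h1
  · rw [clampR_of_lo lo hi bb h1 hlh, clampR_of_lo lo hi a (hab.trans h1) hlh,
      clampR_of_ge a bb hi (h1.trans hlh) hab, clampR_of_ge a bb lo h1 hab]
    ring
  rcases le_total hi a with h2 | h2
  · rw [clampR_of_ge lo hi bb (h2.trans hab) hlh, clampR_of_ge lo hi a h2 hlh,
      clampR_of_lo a bb hi h2 hab, clampR_of_lo a bb lo (hlh.trans h2) hab]
    ring
  rcases le_total lo a with h3 | h3 <;> rcases le_total bb hi with h4 | h4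
  · rw [clampR_of_le lo hi bb (h3.trans hab) h4, clampR_of_le lo hi a h3 h2,
      clampR_of_ge a bb hi h4 hab, clampR_of_lo a bb lo h3 hab]
  · rw [clampR_of_ge lo hi bb h4 hlh, clampR_of_le lo hi a h3 h2,
      clampR_of_le a bb hi h2 h4, clampR_of_lo a bb lo h3 hab]
  · rw [clampR_of_le lo hi bb h1 h4, clampR_of_lo lo hi a h3 hlh,
      clampR_of_ge a bb hi h4 hab, clampR_of_le a bb lo h3 h1]
  · rw [clampR_of_ge lo hi bb h4 hlh, clampR_of_lo lo hi a h3 hlh,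
      clampR_of_le a bb hi h2 h4, clampR_of_le a bb lo h3 h1]

lemma frac_matching_round {α β : Type*} [Fintype α] [Fintype β] [DecidableEq α] [DecidableEq β]
    (X : α → β → ℝ) (c : α → β → ℝ)
    (hX0 : ∀ a b, 0 ≤ X a b) (hrow : ∀ a, ∑ b, X a b ≤ 1) (hcol : ∀ b, ∑ a, X a b ≤ 1) :
    ∃ Y : α → β → ℝ, (∀ a b, Y a b = 0 ∨ Y a b = 1) ∧ (∀ a, ∑ b, Y a b ≤ 1) ∧
      (∀ b, ∑ a, Y a b ≤ 1) ∧ (∀ a b, X a b = 0 → Y a b = 0) ∧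
      ∑ a, ∑ b, c a b * Y a b ≥ ∑ a, ∑ b, c a b * X a b := by
  classical
  -- the padded doubly stochastic matrix
  set D : Matrix (α ⊕ β) (α ⊕ β) ℝ := fun x y =>
    match x, y with
    | Sum.inl a, Sum.inr b => X a b
    | Sum.inl a, Sum.inl a' => if a = a' then 1 - ∑ b, X a b else 0
    | Sum.inr b, Sum.inl a => X a b
    | Sum.inr b, Sum.inr b' => if b = b' then 1 - ∑ a, X a b else 0
    with hD
  have hDnn : ∀ x y, 0 ≤ D x y := by
    rintro (a | b) (a' | b')
    · by_cases h : a = a'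
      · subst h; simpa [hD] using sub_nonneg.2 (hrow a)
      · simp [hD, h]
    · exact hX0 a b'
    · exact hX0 a' b
    · by_cases h : b = b'
      · subst h; simpa [hD] using sub_nonneg.2 (hcol b)
      · simp [hD, h]
  have hDmem : D ∈ doublyStochastic ℝ (α ⊕ β) := by
    rw [mem_doublyStochastic_iff_sum]
    refine ⟨hDnn, ?_, ?_⟩
    · rintro (a | b) <;> rw [Fintype.sum_sum_type] <;>
        simp [hD, Finset.sum_ite_eq' Finset.univ]
    · rintro (a | b) <;> rw [Fintype.sum_sum_type] <;>
        simp [hD, Finset.sum_ite_eq Finset.univ]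
  obtain ⟨wt, hwt0, hwt1, hwtD⟩ := exists_eq_sum_perm_of_mem_doublyStochastic hDmem
  have hDentry : ∀ x y, D x y = ∑ σ : Equiv.Perm (α ⊕ β), wt σ * (σ.permMatrix ℝ) x y := by
    intro x y
    rw [← hwtD]
    simp [Matrix.sum_apply, smul_eq_mul]
  have hLD : ∑ a, ∑ bb, c a bb * X a bb = ∑ σ : Equiv.Perm (α ⊕ β),
      wt σ * ∑ a, ∑ bb, c a bb * (σ.permMatrix ℝ) (Sum.inl a) (Sum.inr bb) := by
    calc ∑ a, ∑ bb, c a bb * X a bb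
        = ∑ a, ∑ bb, c a bb * D (Sum.inl a) (Sum.inr bb) := rfl
      _ = ∑ a, ∑ bb, c a bb *
            ∑ σ : Equiv.Perm (α ⊕ β), wt σ * (σ.permMatrix ℝ) (Sum.inl a) (Sum.inr bb) :=
          Finset.sum_congr rfl fun a _ => Finset.sum_congr rfl fun bb _ => congrArg (c a bb * ·) (hDentry (Sum.inl a) (Sum.inr bb))
      _ = ∑ a : α, ∑ bb : β, ∑ σ : Equiv.Perm (α ⊕ β),
            c a bb * (wt σ * (σ.permMatrix ℝ) (Sum.inl a) (Sum.inr bb)) := by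
          simp only [Finset.mul_sum]
      _ = ∑ a : α, ∑ σ : Equiv.Perm (α ⊕ β), ∑ bb : β,
            c a bb * (wt σ * (σ.permMatrix ℝ) (Sum.inl a) (Sum.inr bb)) :=
          Finset.sum_congr rfl fun a _ => Finset.sum_comm
      _ = ∑ σ : Equiv.Perm (α ⊕ β), ∑ a : α, ∑ bb : β,
            c a bb * (wt σ * (σ.permMatrix ℝ) (Sum.inl a) (Sum.inr bb)) := Finset.sum_comm
      _ = ∑ σ : Equiv.Perm (α ⊕ β),
            wt σ * ∑ a : α, ∑ bb : β, c a bb * (σ.permMatrix ℝ) (Sum.inl a) (Sum.inr bb) := by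
          refine Finset.sum_congr rfl fun σ _ => ?_
          rw [Finset.mul_sum]
          refine Finset.sum_congr rfl fun a _ => ?_
          rw [Finset.mul_sum]
          refine Finset.sum_congr rfl fun bb _ => ?_
          ring
  have hexists : ∃ σ : Equiv.Perm (α ⊕ β), 0 < wt σ ∧
      ∑ a, ∑ bb, c a bb * (σ.permMatrix ℝ) (Sum.inl a) (Sum.inr bb) ≥
        ∑ a, ∑ bb, c a bb * X a bb := by
    by_contra hcon
    push_neg at hcon
    obtain ⟨σ0, hσ0⟩ : ∃ σ : Equiv.Perm (α ⊕ β), 0 < wt σ := by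
      by_contra hall
      push_neg at hall
      have : ∑ σ : Equiv.Perm (α ⊕ β), wt σ = 0 :=
        Finset.sum_eq_zero fun σ _ => le_antisymm (hall σ) (hwt0 σ)
      rw [hwt1] at this; norm_num at this
    have hlt : ∑ σ : Equiv.Perm (α ⊕ β),
        wt σ * ∑ a, ∑ bb, c a bb * (σ.permMatrix ℝ) (Sum.inl a) (Sum.inr bb) <
        ∑ σ : Equiv.Perm (α ⊕ β), wt σ * ∑ a, ∑ bb, c a bb * X a bb := by
      refine Finset.sum_lt_sum (fun σ _ => ?_) ⟨σ0, Finset.mem_univ _, ?_⟩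
      · rcases eq_or_lt_of_le (hwt0 σ) with h0 | h0
        · rw [← h0]; simp
        · exact mul_le_mul_of_nonneg_left (hcon σ h0).le (hwt0 σ)
      · exact mul_lt_mul_of_pos_left (hcon σ0 hσ0) hσ0
    rw [← Finset.sum_mul, hwt1, one_mul, ← hLD] at hlt
    exact lt_irrefl _ hlt
  obtain ⟨σ0, hσ0pos, hσ0ge⟩ := hexists
  have hentall : ∀ (σ : Equiv.Perm (α ⊕ β)) x y, σ.permMatrix ℝ x y = if σ x = y then 1 else 0 := by
    intro σ x y
    simp [Equiv.Perm.permMatrix, PEquiv.toMatrix_apply, Equiv.toPEquiv_apply, eq_comm]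
  have hentallnn : ∀ (σ : Equiv.Perm (α ⊕ β)) x y, (0:ℝ) ≤ σ.permMatrix ℝ x y := by
    intro σ x y; rw [hentall]; split <;> norm_num
  have hent : ∀ x y, σ0.permMatrix ℝ x y = if σ0 x = y then 1 else 0 := hentall σ0
  have hentnn : ∀ x y, (0:ℝ) ≤ σ0.permMatrix ℝ x y := hentallnn σ0
  refine ⟨fun a bb => σ0.permMatrix ℝ (Sum.inl a) (Sum.inr bb), ?_, ?_, ?_, ?_, ?_⟩
  · intro a bb; simp only [hent]; split
    · right; rfl
    · left; rfl
  · intro a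
    have h1 : ∑ y : α ⊕ β, σ0.permMatrix ℝ (Sum.inl a) y = 1 :=
      sum_row_of_mem_doublyStochastic permMatrix_mem_doublyStochastic _
    rw [Fintype.sum_sum_type] at h1
    have h2 : (0:ℝ) ≤ ∑ a' : α, σ0.permMatrix ℝ (Sum.inl a) (Sum.inl a') :=
      Finset.sum_nonneg fun a' _ => hentnn _ _
    linarith
  · intro bb
    have h1 : ∑ x : α ⊕ β, σ0.permMatrix ℝ x (Sum.inr bb) = 1 :=
      sum_col_of_mem_doublyStochastic permMatrix_mem_doublyStochastic _
    rw [Fintype.sum_sum_type] at h1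
    have h2 : (0:ℝ) ≤ ∑ b' : β, σ0.permMatrix ℝ (Sum.inr b') (Sum.inr bb) :=
      Finset.sum_nonneg fun b' _ => hentnn _ _
    linarith
  · intro a bb hXab
    have hD0 : ∑ σ : Equiv.Perm (α ⊕ β), wt σ * (σ.permMatrix ℝ) (Sum.inl a) (Sum.inr bb) = 0 :=
      (hDentry (Sum.inl a) (Sum.inr bb)).symm.trans hXab
    have hnn : ∀ σ : Equiv.Perm (α ⊕ β), σ ∈ Finset.univ →
        (0:ℝ) ≤ wt σ * σ.permMatrix ℝ (Sum.inl a) (Sum.inr bb) := fun σ _ =>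
      mul_nonneg (hwt0 σ) (hentallnn σ _ _)
    have h0 := (Finset.sum_eq_zero_iff_of_nonneg hnn).1 hD0 σ0 (Finset.mem_univ _)
    rcases mul_eq_zero.1 h0 with h | h
    · exact absurd h (ne_of_gt hσ0pos)
    · exact h
  · exact hσ0ge

lemma fin_telescope (g : ℕ → ℝ) (m : ℕ) :
    ∑ t : Fin m, (g ((t : ℕ) + 1) - g (t : ℕ)) = g m - g 0 := by
  rw [Fin.sum_univ_eq_sum_range (fun t : ℕ => g (t + 1) - g t) m]
  exact Finset.sum_range_sub g m

lemma half_candidate (n m : ℕ) (b : Fin n → ℝ) (v : Fin n → Fin m → ℝ) (μ : Fin n → ℝ)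
    (w : Fin n → Fin m → ℝ) (hb : ∀ i, 0 ≤ b i) (hv : ∀ i j, 0 ≤ v i j ∧ v i j ≤ b i)
    (hμ : ∀ i, 0 ≤ μ i) (x : Fin n → Fin m → ℝ)
    (hx01 : ∀ i j, 0 ≤ x i j ∧ x i j ≤ 1)
    (hcol : ∀ j, ∑ i, x i j ≤ 1)
    (hbud : ∀ i, ∑ j, x i j * v i j ≤ b i) :
    ∃ y : Fin n → Fin m → ℝ,
      (∀ i j, y i j = 0 ∨ y i j = 1) ∧ (∀ j, ∑ i, y i j ≤ 1) ∧
      (∑ i, μ i * min (b i) (∑ j, y i j * v i j)) + (∑ i, ∑ j, y i j * w i j) ≥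
        (1/2) * ∑ i, ∑ j, (μ i * v i j + w i j) * x i j := by
  classical
  rcases Nat.eq_zero_or_pos m with hm0 | hm
  · subst hm0
    refine ⟨fun _ _ => 0, fun i j => Or.inl rfl, fun j => by simp, ?_⟩
    simp [min_eq_right (hb _)]
  -- sorted order: v i (s i 0) ≥ v i (s i 1) ≥ ...
  set s : Fin n → Equiv.Perm (Fin m) := fun i => Tuple.sort (fun k => -(v i k)) with hs
  have hsort : ∀ i (k l : Fin m), k ≤ l → v i (s i l) ≤ v i (s i k) := by
    intro i k l hkl
    have h := Tuple.monotone_sort (fun k => -(v i k)) hkl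
    simp only [Function.comp_apply] at h
    simp only [hs]
    linarith [h]
  -- prefix masses
  set M : Fin n → ℕ → ℝ := fun i k => ∑ l : Fin m, if (l : ℕ) < k then x i (s i l) else 0
    with hM
  have hM0 : ∀ i, M i 0 = 0 := by intro i; simp [hM]
  have hMstep : ∀ i (k : Fin m), M i ((k : ℕ) + 1) = M i k + x i (s i k) := by
    intro i k
    have hterm : ∀ l : Fin m, (if (l : ℕ) < (k : ℕ) + 1 then x i (s i l) else 0) =
        (if (l : ℕ) < (k : ℕ) then x i (s i l) else 0) +
          (if l = k then x i (s i l) else 0) := by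
      intro l
      by_cases he : l = k
      · subst he
        rw [if_pos (Nat.lt_succ_self _), if_neg (lt_irrefl _), if_pos rfl]
        ring
      · have hne : (l : ℕ) ≠ (k : ℕ) := fun hval => he (Fin.ext hval)
        rw [if_neg he]
        by_cases hlt : (l : ℕ) < (k : ℕ)
        · rw [if_pos hlt, if_pos (by omega)]
          ring
        · rw [if_neg hlt, if_neg (by omega)]
          ring
    calc M i ((k : ℕ) + 1)
        = ∑ l : Fin m, ((if (l : ℕ) < (k : ℕ) then x i (s i l) else 0) +
            (if l = k then x i (s i l) else 0)) := Finset.sum_congr rfl fun l _ => hterm l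
      _ = M i k + x i (s i k) := by
          rw [Finset.sum_add_distrib]
          congr 1
          simp
  have hMmono : ∀ i, Monotone (M i) := by
    intro i k k' hkk'
    refine Finset.sum_le_sum fun l _ => ?_
    by_cases h1 : (l : ℕ) < k
    · rw [if_pos h1, if_pos (by omega)]
    · rw [if_neg h1]
      by_cases h2 : (l : ℕ) < k'
      · rw [if_pos h2]
        exact (hx01 _ _).1
      · rw [if_neg h2]
  have hMnn : ∀ i k, 0 ≤ M i k := by
    intro i k
    refine Finset.sum_nonneg fun l _ => ?_
    split
    · exact (hx01 _ _).1
    · exact le_rfl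
  have hMm_eq : ∀ i, M i m = ∑ j, x i j := by
    intro i
    have h1 : M i m = ∑ l : Fin m, x i (s i l) := by
      refine Finset.sum_congr rfl fun l _ => ?_
      rw [if_pos l.isLt]
    rw [h1]
    exact Equiv.sum_comp (s i) (x i)
  have hMm_le : ∀ i, M i m ≤ (m : ℝ) := by
    intro i
    rw [hMm_eq]
    calc ∑ j, x i j ≤ ∑ _j : Fin m, (1:ℝ) := Finset.sum_le_sum fun j _ => (hx01 i j).2
      _ = m := by simp
  set pos : Fin n → Fin m → Fin m := fun i j => (s i).symm j with hpos
  have hspos : ∀ i j, s i (pos i j) = j := fun i j => (s i).apply_symm_apply j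
  -- the fractional bucket matching
  set XX : (Fin n × Fin m) → Fin m → ℝ := fun p j =>
    clampR ((p.2 : ℕ) : ℝ) (((p.2 : ℕ) : ℝ) + 1) (M p.1 ((pos p.1 j : ℕ) + 1)) -
      clampR ((p.2 : ℕ) : ℝ) (((p.2 : ℕ) : ℝ) + 1) (M p.1 ((pos p.1 j : ℕ))) with hXX
  have hABle : ∀ i j, M i ((pos i j : ℕ)) ≤ M i ((pos i j : ℕ) + 1) :=
    fun i j => hMmono i (Nat.le_succ _)
  have hXXnn : ∀ p j, 0 ≤ XX p j := by
    intro p j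
    simp only [hXX, sub_nonneg]
    exact clampR_mono _ _ (hABle p.1 j)
  have htlt : ∀ t : Fin m, ((t : ℕ) : ℝ) ≤ ((t : ℕ) : ℝ) + 1 := fun t => by linarith
  have hF1 : ∀ i j, ∑ t : Fin m, XX (i, t) j = x i j := by
    intro i j
    have hple : (pos i j : ℕ) + 1 ≤ m := (pos i j).isLt
    have hAB : M i ((pos i j : ℕ)) ≤ M i ((pos i j : ℕ) + 1) := hABle i j
    have hBx : M i ((pos i j : ℕ) + 1) = M i ((pos i j : ℕ)) + x i j := by
      rw [hMstep i (pos i j), hspos]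
    have hstep : ∀ t : Fin m, XX (i, t) j =
        (fun k : ℕ => clampR (M i ((pos i j : ℕ))) (M i ((pos i j : ℕ) + 1)) (k : ℝ))
            ((t : ℕ) + 1) -
          (fun k : ℕ => clampR (M i ((pos i j : ℕ))) (M i ((pos i j : ℕ) + 1)) (k : ℝ))
            (t : ℕ) := by
      intro t
      have h := clampR_swap (M i ((pos i j : ℕ))) (M i ((pos i j : ℕ) + 1))
        ((t : ℕ) : ℝ) (((t : ℕ) : ℝ) + 1) hAB (htlt t)
      simp only []
      push_cast
      exact h
    rw [Finset.sum_congr rfl fun t _ => hstep t,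
      fin_telescope (fun k : ℕ => clampR (M i ((pos i j : ℕ))) (M i ((pos i j : ℕ) + 1)) (k : ℝ)) m]
    have hBm : M i ((pos i j : ℕ) + 1) ≤ (m : ℝ) := le_trans (hMmono i hple) (hMm_le i)
    have hA0 : ((0 : ℕ) : ℝ) ≤ M i ((pos i j : ℕ)) := by
      rw [Nat.cast_zero]; exact hMnn i _
    rw [clampR_of_ge _ _ _ hBm hAB, clampR_of_lo _ _ _ hA0 hAB]
    linarith [hBx]
  have hF2 : ∀ i (t : Fin m), ∑ j, XX (i, t) j =
      clampR ((t : ℕ) : ℝ) (((t : ℕ) : ℝ) + 1) (M i m) - ((t : ℕ) : ℝ) := by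
    intro i t
    have hre : ∑ j, XX (i, t) j = ∑ k : Fin m,
        ((fun u : ℕ => clampR ((t : ℕ) : ℝ) (((t : ℕ) : ℝ) + 1) (M i u)) ((k : ℕ) + 1) -
          (fun u : ℕ => clampR ((t : ℕ) : ℝ) (((t : ℕ) : ℝ) + 1) (M i u)) ((k : ℕ))) := by
      rw [← Equiv.sum_comp (s i).symm (fun k : Fin m =>
        (fun u : ℕ => clampR ((t : ℕ) : ℝ) (((t : ℕ) : ℝ) + 1) (M i u)) ((k : ℕ) + 1) -
          (fun u : ℕ => clampR ((t : ℕ) : ℝ) (((t : ℕ) : ℝ) + 1) (M i u)) ((k : ℕ)))]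
    rw [hre, fin_telescope (fun k : ℕ => clampR ((t : ℕ) : ℝ) (((t : ℕ) : ℝ) + 1) (M i k)) m]
    rw [hM0]
    have h0t : (0 : ℝ) ≤ ((t : ℕ) : ℝ) := Nat.cast_nonneg _
    rw [clampR_of_lo _ _ _ h0t (htlt t)]
  have hF2le : ∀ i (t : Fin m), ∑ j, XX (i, t) j ≤ 1 := by
    intro i t
    rw [hF2]
    have := clampR_le_hi ((t : ℕ) : ℝ) (((t : ℕ) : ℝ) + 1) (M i m) (htlt t)
    linarith
  have hF2full : ∀ i (t : Fin m), ((t : ℕ) : ℝ) + 1 ≤ M i m → ∑ j, XX (i, t) j = 1 := by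
    intro i t ht
    rw [hF2, clampR_of_ge _ _ _ ht (htlt t)]
    ring
  have hBgt : ∀ i (t : Fin m) j, 0 < XX (i, t) j → ((t : ℕ) : ℝ) < M i ((pos i j : ℕ) + 1) := by
    intro i t j hx
    have h1 : clampR ((t : ℕ) : ℝ) (((t : ℕ) : ℝ) + 1) (M i ((pos i j : ℕ))) <
        clampR ((t : ℕ) : ℝ) (((t : ℕ) : ℝ) + 1) (M i ((pos i j : ℕ) + 1)) := by
      simp only [hXX] at hx
      linarith
    have h2 := clampR_ge_lo ((t : ℕ) : ℝ) (((t : ℕ) : ℝ) + 1) (M i ((pos i j : ℕ))) (htlt t)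
    have h3 : ((t : ℕ) : ℝ) <
        clampR ((t : ℕ) : ℝ) (((t : ℕ) : ℝ) + 1) (M i ((pos i j : ℕ) + 1)) :=
      lt_of_le_of_lt h2 h1
    have h4 : ((t : ℕ) : ℝ) < max ((t : ℕ) : ℝ) (M i ((pos i j : ℕ) + 1)) :=
      lt_of_lt_of_le h3 (min_le_right _ _)
    rcases lt_max_iff.mp h4 with h | h
    · exact absurd h (lt_irrefl _)
    · exact h
  have hAlt : ∀ i (t : Fin m) j, 0 < XX (i, t) j → M i ((pos i j : ℕ)) < ((t : ℕ) : ℝ) + 1 := by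
    intro i t j hx
    have h1 : clampR ((t : ℕ) : ℝ) (((t : ℕ) : ℝ) + 1) (M i ((pos i j : ℕ))) <
        clampR ((t : ℕ) : ℝ) (((t : ℕ) : ℝ) + 1) (M i ((pos i j : ℕ) + 1)) := by
      simp only [hXX] at hx
      linarith
    have h2 := clampR_le_hi ((t : ℕ) : ℝ) (((t : ℕ) : ℝ) + 1) (M i ((pos i j : ℕ) + 1)) (htlt t)
    have h5 : max ((t : ℕ) : ℝ) (M i ((pos i j : ℕ))) < ((t : ℕ) : ℝ) + 1 := by
      by_contra hcon
      push_neg at hcon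
      have : clampR ((t : ℕ) : ℝ) (((t : ℕ) : ℝ) + 1) (M i ((pos i j : ℕ))) =
          ((t : ℕ) : ℝ) + 1 := min_eq_left hcon
      linarith
    exact lt_of_le_of_lt (le_max_right _ _) h5
  have hF4 : ∀ i (t t' : Fin m) j j', 0 < XX (i, t) j → 0 < XX (i, t') j' →
      (t' : ℕ) + 1 = (t : ℕ) → v i j ≤ v i j' := by
    intro i t t' j j' h1 h2 ht
    have hb1 := hBgt i t j h1
    have ha1 := hAlt i t' j' h2
    have hcast : ((t' : ℕ) : ℝ) + 1 = ((t : ℕ) : ℝ) := by exact_mod_cast congrArg (Nat.cast (R := ℝ)) ht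
    rw [hcast] at ha1
    have hlt : M i ((pos i j' : ℕ)) < M i ((pos i j : ℕ) + 1) := lt_trans ha1 hb1
    have hple : (pos i j' : ℕ) ≤ (pos i j : ℕ) := by
      by_contra hcon
      push_neg at hcon
      exact absurd (hMmono i hcon) (not_le.mpr hlt)
    have := hsort i (pos i j') (pos i j) (by exact hple)
    rwa [hspos, hspos] at this
  -- apply the matching rounding
  have hXXrow : ∀ p : Fin n × Fin m, ∑ j, XX p j ≤ 1 := fun p => hF2le p.1 p.2
  have hXXcol : ∀ j, ∑ p : Fin n × Fin m, XX p j ≤ 1 := by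
    intro j
    rw [Fintype.sum_prod_type]
    calc ∑ i, ∑ t, XX (i, t) j = ∑ i, x i j :=
          Finset.sum_congr rfl fun i _ => hF1 i j
      _ ≤ 1 := hcol j
  obtain ⟨Y, hY01, hYrow, hYcolS, hYsupp, hYprof⟩ := frac_matching_round XX
    (fun p j => μ p.1 * v p.1 j + w p.1 j) hXXnn hXXrow hXXcol
  have hYnn : ∀ p j, 0 ≤ Y p j := by
    intro p j
    rcases hY01 p j with h | h <;> rw [h] <;> norm_num
  set t0 : Fin m := ⟨0, hm⟩ with ht0
  have ht0v : (t0 : ℕ) = 0 := rfl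
  set rest : Fin n → Fin m → ℝ := fun i j => ∑ t, if t = t0 then 0 else Y (i, t) j with hrest
  have hrestnn : ∀ i j, 0 ≤ rest i j := by
    intro i j
    refine Finset.sum_nonneg fun t _ => ?_
    split
    · exact le_rfl
    · exact hYnn _ _
  have hrest_le : ∀ i j, rest i j ≤ ∑ t, Y (i, t) j := by
    intro i j
    refine Finset.sum_le_sum fun t _ => ?_
    split
    · exact hYnn _ _
    · exact le_rfl
  have hYcolT : ∀ i j, ∑ t, Y (i, t) j ≤ 1 := by
    intro i j
    have h1 := hYcolS j
    rw [Fintype.sum_prod_type] at h1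
    have h2 : ∑ t, Y (i, t) j ≤ ∑ i', ∑ t, Y (i', t) j :=
      Finset.single_le_sum (f := fun i' => ∑ t, Y (i', t) j)
        (fun i' _ => Finset.sum_nonneg fun t _ => hYnn _ _) (Finset.mem_univ i)
    linarith
  have hrest01 : ∀ i j, rest i j = 0 ∨ rest i j = 1 := by
    intro i j
    by_cases hall : ∀ t : Fin m, (if t = t0 then 0 else Y (i, t) j) = 0
    · left
      exact Finset.sum_eq_zero fun t _ => hall t
    · right
      push_neg at hall
      obtain ⟨t1, ht1⟩ := hall
      have ht1n : t1 ≠ t0 := by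
        intro h
        rw [if_pos h] at ht1
        exact ht1 rfl
      rw [if_neg ht1n] at ht1
      have hY1 : Y (i, t1) j = 1 := (hY01 _ _).resolve_left ht1
      have hge : (1 : ℝ) ≤ rest i j := by
        have h3 := Finset.single_le_sum (f := fun t => if t = t0 then 0 else Y (i, t) j)
          (fun t _ => by
            split
            · exact le_rfl
            · exact hYnn _ _) (Finset.mem_univ t1)
        rw [if_neg ht1n, hY1] at h3
        exact h3
      have hle : rest i j ≤ 1 := le_trans (hrest_le i j) (hYcolT i j)
      linarith
  -- budget bounds for the two bins
  have hload1 : ∀ i, ∑ j, Y (i, t0) j * v i j ≤ b i := by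
    intro i
    calc ∑ j, Y (i, t0) j * v i j ≤ ∑ j, Y (i, t0) j * b i :=
        Finset.sum_le_sum fun j _ => mul_le_mul_of_nonneg_left (hv i j).2 (hYnn _ _)
      _ = (∑ j, Y (i, t0) j) * b i := by rw [Finset.sum_mul]
      _ ≤ 1 * b i := mul_le_mul_of_nonneg_right (hYrow (i, t0)) (hb i)
      _ = b i := one_mul _
  set BV : Fin n → Fin m → ℝ := fun i t' => ∑ j, XX (i, t') j * v i j with hBVdef
  have hBVnn : ∀ i t', 0 ≤ BV i t' :=
    fun i t' => Finset.sum_nonneg fun j _ => mul_nonneg (hXXnn _ _) (hv i j).1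
  have hBVtot : ∀ i, ∑ t', BV i t' = ∑ j, x i j * v i j := by
    intro i
    rw [hBVdef]
    rw [Finset.sum_comm]
    refine Finset.sum_congr rfl fun j _ => ?_
    rw [← Finset.sum_mul, hF1]
  set tm : Fin m → Fin m := fun t => ⟨(t : ℕ) - 1, lt_of_le_of_lt (Nat.sub_le _ _) t.isLt⟩
    with htm
  have hslot : ∀ i (t : Fin m), t ≠ t0 → ∑ j, Y (i, t) j * v i j ≤ BV i (tm t) := by
    intro i t ht
    have htval : 1 ≤ (t : ℕ) := by
      by_contra h
      push_neg at h
      exact ht (Fin.ext (by rw [ht0v]; omega))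
    have htm1 : ((tm t : ℕ)) + 1 = (t : ℕ) := by
      have h' : ((tm t : ℕ)) = (t : ℕ) - 1 := rfl
      omega
    have hkey : ∀ j, Y (i, t) j * v i j ≤ Y (i, t) j * BV i (tm t) := by
      intro j
      rcases hY01 (i, t) j with h0 | h1
      · rw [h0]
        simp
      · rw [h1, one_mul, one_mul]
        have hXpos : 0 < XX (i, t) j := by
          rcases eq_or_lt_of_le (hXXnn (i, t) j) with he | hl
          · exfalso
            have hz := hYsupp (i, t) j he.symm
            rw [h1] at hz
            norm_num at hz
          · exact hl
        have hfull : ∑ j', XX (i, tm t) j' = 1 := by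
          apply hF2full
          have hgt := hBgt i t j hXpos
          have hmle : M i ((pos i j : ℕ) + 1) ≤ M i m := hMmono i (pos i j).isLt
          have hcast : ((tm t : ℕ) : ℝ) + 1 = ((t : ℕ) : ℝ) := by
            exact_mod_cast congrArg (Nat.cast (R := ℝ)) htm1
          linarith
        calc v i j = v i j * ∑ j', XX (i, tm t) j' := by rw [hfull, mul_one]
          _ = ∑ j', v i j * XX (i, tm t) j' := by rw [Finset.mul_sum]
          _ ≤ ∑ j', v i j' * XX (i, tm t) j' := by
              refine Finset.sum_le_sum fun j' _ => ?_
              rcases eq_or_lt_of_le (hXXnn (i, tm t) j') with he | hl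
              · rw [← he, mul_zero, mul_zero]
              · exact mul_le_mul_of_nonneg_right
                  (hF4 i t (tm t) j j' hXpos hl htm1) hl.le
          _ = BV i (tm t) := by
              rw [hBVdef]
              exact Finset.sum_congr rfl fun j' _ => mul_comm _ _
    calc ∑ j, Y (i, t) j * v i j ≤ ∑ j, Y (i, t) j * BV i (tm t) :=
        Finset.sum_le_sum fun j _ => hkey j
      _ = (∑ j, Y (i, t) j) * BV i (tm t) := by rw [Finset.sum_mul]
      _ ≤ 1 * BV i (tm t) := mul_le_mul_of_nonneg_right (hYrow (i, t)) (hBVnn i (tm t))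
      _ = BV i (tm t) := one_mul _
  have hload2 : ∀ i, ∑ j, rest i j * v i j ≤ b i := by
    intro i
    have hswap : ∑ j, rest i j * v i j =
        ∑ t, (if t = t0 then 0 else ∑ j, Y (i, t) j * v i j) := by
      calc ∑ j, rest i j * v i j
          = ∑ j, ∑ t, (if t = t0 then 0 else Y (i, t) j) * v i j := by
            refine Finset.sum_congr rfl fun j _ => ?_
            rw [hrest]
            rw [Finset.sum_mul]
        _ = ∑ t, ∑ j, (if t = t0 then 0 else Y (i, t) j) * v i j := Finset.sum_comm
        _ = ∑ t, (if t = t0 then 0 else ∑ j, Y (i, t) j * v i j) := by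
            refine Finset.sum_congr rfl fun t _ => ?_
            by_cases h : t = t0
            · simp [h]
            · simp [h]
    rw [hswap]
    have hstep1 : ∑ t, (if t = t0 then 0 else ∑ j, Y (i, t) j * v i j) ≤
        ∑ t, (if t = t0 then 0 else BV i (tm t)) := by
      refine Finset.sum_le_sum fun t _ => ?_
      by_cases h : t = t0
      · simp [h]
      · simp only [if_neg h]
        exact hslot i t h
    have e1 : ∑ t, (if t = t0 then 0 else BV i (tm t)) =
        ∑ t ∈ Finset.univ.erase t0, BV i (tm t) := by
      rw [← Finset.sum_erase_add Finset.univ _ (Finset.mem_univ t0)]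
      rw [if_pos rfl, add_zero]
      refine Finset.sum_congr rfl fun t ht => ?_
      rw [if_neg (Finset.ne_of_mem_erase ht)]
    have hinjOn : ∀ a ∈ Finset.univ.erase t0, ∀ a' ∈ Finset.univ.erase t0,
        tm a = tm a' → a = a' := by
      intro a ha a' ha' he
      have ha1 : 1 ≤ (a : ℕ) := by
        by_contra h
        push_neg at h
        exact (Finset.mem_erase.mp ha).1 (Fin.ext (by rw [ht0v]; omega))
      have ha2 : 1 ≤ (a' : ℕ) := by
        by_contra h
        push_neg at h
        exact (Finset.mem_erase.mp ha').1 (Fin.ext (by rw [ht0v]; omega))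
      have hv1 : (a : ℕ) - 1 = (a' : ℕ) - 1 := by
        have e1 : ((tm a : ℕ)) = (a : ℕ) - 1 := rfl
        have e2 : ((tm a' : ℕ)) = (a' : ℕ) - 1 := rfl
        rw [← e1, ← e2, he]
      exact Fin.ext (by omega)
    have hstep2 : ∑ t ∈ Finset.univ.erase t0, BV i (tm t) ≤ ∑ t', BV i t' := by
      rw [← Finset.sum_image hinjOn]
      exact Finset.sum_le_sum_of_subset_of_nonneg (Finset.subset_univ _)
        fun t' _ _ => hBVnn i t'
    calc ∑ t, (if t = t0 then 0 else ∑ j, Y (i, t) j * v i j)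
        ≤ ∑ t, (if t = t0 then 0 else BV i (tm t)) := hstep1
      _ = ∑ t ∈ Finset.univ.erase t0, BV i (tm t) := e1
      _ ≤ ∑ t', BV i t' := hstep2
      _ = ∑ j, x i j * v i j := hBVtot i
      _ ≤ b i := hbud i
  -- profits of the two bins
  set P1 : Fin n → ℝ := fun i => ∑ j, (μ i * v i j + w i j) * Y (i, t0) j with hP1
  set P2 : Fin n → ℝ := fun i => ∑ j, (μ i * v i j + w i j) * rest i j with hP2
  have hPsum : ∑ i, (P1 i + P2 i) ≥ ∑ i, ∑ j, (μ i * v i j + w i j) * x i j := by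
    have hR : ∑ p : Fin n × Fin m, ∑ j, (μ p.1 * v p.1 j + w p.1 j) * XX p j =
        ∑ i, ∑ j, (μ i * v i j + w i j) * x i j := by
      rw [Fintype.sum_prod_type]
      refine Finset.sum_congr rfl fun i _ => ?_
      rw [Finset.sum_comm]
      refine Finset.sum_congr rfl fun j _ => ?_
      dsimp only
      rw [← Finset.mul_sum, hF1]
    have hLp : ∑ p : Fin n × Fin m, ∑ j, (μ p.1 * v p.1 j + w p.1 j) * Y p j =
        ∑ i, (P1 i + P2 i) := by
      rw [Fintype.sum_prod_type]
      refine Finset.sum_congr rfl fun i _ => ?_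
      have e2 : P2 i = ∑ t ∈ Finset.univ.erase t0,
          ∑ j, (μ i * v i j + w i j) * Y (i, t) j := by
        rw [hP2]
        calc ∑ j, (μ i * v i j + w i j) * rest i j
            = ∑ j, ∑ t, (if t = t0 then 0 else (μ i * v i j + w i j) * Y (i, t) j) := by
              refine Finset.sum_congr rfl fun j _ => ?_
              rw [hrest, Finset.mul_sum]
              refine Finset.sum_congr rfl fun t _ => ?_
              by_cases h : t = t0
              · simp [h]
              · simp [h]
          _ = ∑ t, ∑ j, (if t = t0 then 0 else (μ i * v i j + w i j) * Y (i, t) j) :=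
              Finset.sum_comm
          _ = ∑ t, (if t = t0 then 0 else ∑ j, (μ i * v i j + w i j) * Y (i, t) j) := by
              refine Finset.sum_congr rfl fun t _ => ?_
              by_cases h : t = t0
              · simp [h]
              · simp [h]
          _ = ∑ t ∈ Finset.univ.erase t0, ∑ j, (μ i * v i j + w i j) * Y (i, t) j := by
              rw [← Finset.sum_erase_add Finset.univ _ (Finset.mem_univ t0)]
              rw [if_pos rfl, add_zero]
              refine Finset.sum_congr rfl fun t ht => ?_
              rw [if_neg (Finset.ne_of_mem_erase ht)]
      rw [e2]
      rw [← Finset.sum_erase_add Finset.univ _ (Finset.mem_univ t0)]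
      rw [hP1]
      ring
    rw [hLp, hR] at hYprof
    exact hYprof
  -- choose per bidder the better bin
  set y : Fin n → Fin m → ℝ := fun i j => if P2 i ≤ P1 i then Y (i, t0) j else rest i j
    with hy
  refine ⟨y, ?_, ?_, ?_⟩
  · intro i j
    rw [hy]
    dsimp only
    split
    · exact hY01 _ _
    · exact hrest01 _ _
  · intro j
    have hle : ∀ i, y i j ≤ ∑ t, Y (i, t) j := by
      intro i
      rw [hy]
      dsimp only
      split
      · exact Finset.single_le_sum (f := fun t => Y (i, t) j)
          (fun t _ => hYnn (i, t) j) (Finset.mem_univ t0)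
      · exact hrest_le i j
    calc ∑ i, y i j ≤ ∑ i, ∑ t, Y (i, t) j := Finset.sum_le_sum fun i _ => hle i
      _ = ∑ p : Fin n × Fin m, Y p j :=
          (Fintype.sum_prod_type (f := fun p : Fin n × Fin m => Y p j)).symm
      _ ≤ 1 := hYcolS j
  · have hper : ∀ i, μ i * min (b i) (∑ j, y i j * v i j) + ∑ j, y i j * w i j ≥
        (1/2) * (P1 i + P2 i) := by
      intro i
      have hload : ∑ j, y i j * v i j ≤ b i := by
        by_cases hc : P2 i ≤ P1 i
        · simp only [hy, if_pos hc]
          exact hload1 i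
        · simp only [hy, if_neg hc]
          exact hload2 i
      have hmin : min (b i) (∑ j, y i j * v i j) = ∑ j, y i j * v i j :=
        min_eq_right hload
      rw [hmin]
      have halg : μ i * (∑ j, y i j * v i j) + ∑ j, y i j * w i j =
          ∑ j, (μ i * v i j + w i j) * y i j := by
        rw [Finset.mul_sum, ← Finset.sum_add_distrib]
        refine Finset.sum_congr rfl fun j _ => ?_
        ring
      rw [halg]
      by_cases hc : P2 i ≤ P1 i
      · have he : ∑ j, (μ i * v i j + w i j) * y i j = P1 i := by
          simp only [hy, if_pos hc]
          rfl
        rw [he]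
        linarith
      · have he : ∑ j, (μ i * v i j + w i j) * y i j = P2 i := by
          simp only [hy, if_neg hc]
          rfl
        rw [he]
        push_neg at hc
        linarith
    calc (∑ i, μ i * min (b i) (∑ j, y i j * v i j)) + (∑ i, ∑ j, y i j * w i j)
        = ∑ i, (μ i * min (b i) (∑ j, y i j * v i j) + ∑ j, y i j * w i j) := by
          rw [Finset.sum_add_distrib]
      _ ≥ ∑ i, (1/2) * (P1 i + P2 i) := Finset.sum_le_sum fun i _ => hper i
      _ = (1/2) * ∑ i, (P1 i + P2 i) := by rw [Finset.mul_sum]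
      _ ≥ (1/2) * ∑ i, ∑ j, (μ i * v i j + w i j) * x i j := by
          have := hPsum
          linarith

/-- The integrality gap of the BAVWM LP relaxation is at most 3: from any
feasible fractional solution one can obtain an integral allocation whose true BAVWM
objective is at least a third of the fractional split objective. -/
theorem bavwm_integrality_gap_three (n m : ℕ)
    (b : Fin n → ℝ) (v : Fin n → Fin m → ℝ) (μ : Fin n → ℝ) (w : Fin n → Fin m → ℝ)
    (hb : ∀ i, 0 ≤ b i) (hv : ∀ i j, 0 ≤ v i j ∧ v i j ≤ b i) (hμ : ∀ i, 0 ≤ μ i)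
    (xb xh : Fin n → Fin m → ℝ)
    (hxb01 : ∀ i j, 0 ≤ xb i j ∧ xb i j ≤ 1) (hxh01 : ∀ i j, 0 ≤ xh i j ∧ xh i j ≤ 1)
    (hfeas : ∀ j, ∑ i, (xb i j + xh i j) ≤ 1)
    (hbud : ∀ i, ∑ j, xb i j * v i j ≤ b i) :
    ∃ y : Fin n → Fin m → ℝ,
      (∀ i j, y i j = 0 ∨ y i j = 1) ∧
      (∀ j, ∑ i, y i j ≤ 1) ∧
      (∑ i, μ i * min (b i) (∑ j, y i j * v i j)) + (∑ i, ∑ j, y i j * w i j) ≥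
        (1 / 3) * ((∑ i, ∑ j, μ i * xb i j * v i j)
          + ∑ i, ∑ j, w i j * (xb i j + xh i j)) := by
  classical
  rcases Nat.eq_zero_or_pos n with hn0 | hn
  · subst hn0
    refine ⟨fun _ _ => 0, fun i j => Or.inl rfl, fun j => by simp, ?_⟩
    simp
  -- column bounds for xb and xh separately
  have hxbcol : ∀ j, ∑ i, xb i j ≤ 1 := by
    intro j
    have h1 := hfeas j
    rw [Finset.sum_add_distrib] at h1
    have h2 : (0:ℝ) ≤ ∑ i, xh i j := Finset.sum_nonneg fun i _ => (hxh01 i j).1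
    linarith
  have hxhcol : ∀ j, ∑ i, xh i j ≤ 1 := by
    intro j
    have h1 := hfeas j
    rw [Finset.sum_add_distrib] at h1
    have h2 : (0:ℝ) ≤ ∑ i, xb i j := Finset.sum_nonneg fun i _ => (hxb01 i j).1
    linarith
  -- the additive-part candidate: per item, the best positive virtual value
  have hex : ∀ j, ∃ i0 : Fin n, ∀ i, w i j ≤ w i0 j := by
    intro j
    obtain ⟨i0, -, h⟩ := Finset.exists_max_image Finset.univ (fun i => w i j)
      ⟨⟨0, hn⟩, Finset.mem_univ _⟩
    exact ⟨i0, fun i => h i (Finset.mem_univ i)⟩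
  choose i1 hi1 using hex
  set y1 : Fin n → Fin m → ℝ := fun i j => if i = i1 j ∧ 0 < w i j then 1 else 0 with hy1
  have hy101 : ∀ i j, y1 i j = 0 ∨ y1 i j = 1 := by
    intro i j
    rw [hy1]
    dsimp only
    split
    · right; rfl
    · left; rfl
  have hy1col : ∀ j, ∑ i, y1 i j ≤ 1 := by
    intro j
    calc ∑ i, y1 i j ≤ ∑ i, (if i = i1 j then 1 else 0) := by
          refine Finset.sum_le_sum fun i _ => ?_
          rw [hy1]
          dsimp only
          by_cases h1 : i = i1 j ∧ 0 < w i j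
          · rw [if_pos h1, if_pos h1.1]
          · rw [if_neg h1]
            split <;> norm_num
      _ = 1 := by rw [Finset.sum_ite_eq' Finset.univ (i1 j) (fun _ => (1:ℝ))]; simp
  have hy1w : ∀ j, ∑ i, y1 i j * w i j = (if 0 < w (i1 j) j then w (i1 j) j else 0) := by
    intro j
    calc ∑ i, y1 i j * w i j
        = ∑ i, (if i = i1 j then (if 0 < w i j then w i j else 0) else 0) := by
          refine Finset.sum_congr rfl fun i _ => ?_
          rw [hy1]
          dsimp only
          by_cases h1 : i = i1 j
          · by_cases h2 : 0 < w i j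
            · rw [if_pos ⟨h1, h2⟩, if_pos h1, if_pos h2, one_mul]
            · rw [if_neg (fun hc => h2 hc.2), if_pos h1, if_neg h2, zero_mul]
          · rw [if_neg (fun hc => h1 hc.1), if_neg h1, zero_mul]
      _ = (if 0 < w (i1 j) j then w (i1 j) j else 0) := by
          rw [Finset.sum_ite_eq' Finset.univ (i1 j)]
          simp
  have hWh : (∑ i, μ i * min (b i) (∑ j, y1 i j * v i j)) + (∑ i, ∑ j, y1 i j * w i j) ≥
      ∑ i, ∑ j, w i j * xh i j := by
    have hmin0 : (0:ℝ) ≤ ∑ i, μ i * min (b i) (∑ j, y1 i j * v i j) := by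
      refine Finset.sum_nonneg fun i _ => ?_
      refine mul_nonneg (hμ i) (le_min (hb i) ?_)
      refine Finset.sum_nonneg fun j _ => ?_
      refine mul_nonneg ?_ (hv i j).1
      rcases hy101 i j with h | h <;> rw [h] <;> norm_num
    have hperj : ∀ j, ∑ i, w i j * xh i j ≤ ∑ i, y1 i j * w i j := by
      intro j
      rw [hy1w j]
      set Mj := (if 0 < w (i1 j) j then w (i1 j) j else 0) with hMj
      have hMj0 : 0 ≤ Mj := by
        rw [hMj]; split
        · linarith
        · exact le_rfl
      have hMjg : ∀ i, w i j ≤ Mj := by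
        intro i
        rw [hMj]; split
        · exact hi1 j i
        · push_neg at *
          calc w i j ≤ w (i1 j) j := hi1 j i
            _ ≤ 0 := by assumption
      calc ∑ i, w i j * xh i j ≤ ∑ i, Mj * xh i j :=
            Finset.sum_le_sum fun i _ => mul_le_mul_of_nonneg_right (hMjg i) (hxh01 i j).1
        _ = Mj * ∑ i, xh i j := by rw [Finset.mul_sum]
        _ ≤ Mj * 1 := mul_le_mul_of_nonneg_left (hxhcol j) hMj0
        _ = Mj := mul_one _
    have hsums : ∑ i, ∑ j, w i j * xh i j ≤ ∑ i, ∑ j, y1 i j * w i j := by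
      rw [Finset.sum_comm, Finset.sum_comm (f := fun i j => y1 i j * w i j)]
      exact Finset.sum_le_sum fun j _ => hperj j
    linarith
  -- the budgeted-part candidate
  obtain ⟨y2, hy201, hy2col, hy2obj⟩ := half_candidate n m b v μ w hb hv hμ xb hxb01 hxbcol hbud
  -- combine
  have hsplit : (∑ i, ∑ j, μ i * xb i j * v i j) + (∑ i, ∑ j, w i j * (xb i j + xh i j)) =
      (∑ i, ∑ j, (μ i * v i j + w i j) * xb i j) + (∑ i, ∑ j, w i j * xh i j) := by
    rw [← Finset.sum_add_distrib, ← Finset.sum_add_distrib]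
    refine Finset.sum_congr rfl fun i _ => ?_
    rw [← Finset.sum_add_distrib, ← Finset.sum_add_distrib]
    refine Finset.sum_congr rfl fun j _ => ?_
    ring
  rw [hsplit]
  by_cases hcase : (∑ i, ∑ j, (μ i * v i j + w i j) * xb i j) ≤ 2 * (∑ i, ∑ j, w i j * xh i j)
  · exact ⟨y1, hy101, hy1col, by linarith⟩
  · push_neg at hcase
    exact ⟨y2, hy201, hy2col, by linarith⟩
end
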